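/- arXiv:2404.17819 — 4 statements merged into one kernel-verified Lean document; each statement's English description precedes it below -/
import Mathlib

section
/- Let R be a commutative ℂ-algebra of finite type, G a finite group acting on R by ℂ-algebra automorphisms, and M a finite-dimensional ℂ-vector space equipped with both an R-module structure and a ℂ-linear G-action which are compatible in the sense that g·(r·m) = (g·r)·(g·m) for all g ∈ G, r ∈ R, m ∈ M. Assume that the support of M in Spec R (the set of primes p with M_p ≠ 0) is a single G-orbit, say the orbit of a point q, and let G_q denote the stabilizer of q in G. Then the localization M_q carries a natural G_q-action, and as representations of G over ℂ, M is isomorphic to the induced representation Ind_{G_q}^{G}(M_q). -/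
noncomputable section

open Complex

/-- Isomorphism of `ℂ`-linear representations of a monoid `G`. -/
def RepIso {G V W : Type*} [Monoid G] [AddCommMonoid V] [Module ℂ V]
    [AddCommMonoid W] [Module ℂ W]
    (ρ : Representation ℂ G V) (π : Representation ℂ G W) : Prop :=
  ∃ e : V ≃ₗ[ℂ] W, ∀ (g : G) (v : V), e (ρ g v) = π g (e v)

/-- The 1-dimensional representation attached to a character `χ : K →* ℂˣ`. -/
def charRep {K : Type*} [Monoid K] (χ : K →* ℂˣ) : Representation ℂ K ℂ where
  toFun k := (χ k : ℂ) • LinearMap.id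
  map_one' := by
    ext
    simp
  map_mul' x y := by
    ext
    simp [smul_smul]
    ring

/-- The direct sum of a family of representations. -/
def PiRep {ι G : Type*} [Monoid G] {V : ι → Type*}
    [∀ i, AddCommMonoid (V i)] [∀ i, Module ℂ (V i)]
    (ρ : ∀ i, Representation ℂ G (V i)) : Representation ℂ G (∀ i, V i) where
  toFun g := LinearMap.pi fun i => (ρ i g).comp (LinearMap.proj i)
  map_one' := by
    ext v i
    simp
  map_mul' x y := by
    ext v i
    simp

/-- The external tensor product `ρ ⊠ τ` of a representation `ρ` of `G` with a
one-dimensional character `τ` of `K`, as a representation of `G × K`. -/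
def boxChar {G K V : Type*} [Monoid G] [Monoid K] [AddCommMonoid V] [Module ℂ V]
    (ρ : Representation ℂ G V) (τ : K →* ℂˣ) : Representation ℂ (G × K) V where
  toFun p := (τ p.2 : ℂ) • ρ p.1
  map_one' := by simp
  map_mul' p q := by
    ext v
    simp [smul_smul, mul_comm, mul_left_comm]

/-- The underlying space of the representation of `G` induced along an (injective) morphism
`φ : K →* G` from the representation `π` of `K`:  functions `f : G → V` satisfying
`f (g * φ h) = π h⁻¹ (f g)`; this realizes `ℂ[G] ⊗_{ℂ[K]} V` for finite groups. -/
def IndSpace {K G : Type*} [Group K] [Group G] (φ : K →* G) {V : Type*}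
    [AddCommMonoid V] [Module ℂ V] (π : Representation ℂ K V) :
    Submodule ℂ (G → V) where
  carrier := {f | ∀ (g : G) (h : K), f (g * φ h) = π h⁻¹ (f g)}
  add_mem' := by
    intro a b ha hb g h
    simp [ha g h, hb g h]
  zero_mem' := by intro g h; simp
  smul_mem' := by
    intro c f hf g h
    simp [hf g h]

/-- The representation of `G` induced along `φ : K →* G` from `π`,
with `G` acting by left translation. -/
def IndRep {K G : Type*} [Group K] [Group G] (φ : K →* G) {V : Type*}
    [AddCommMonoid V] [Module ℂ V] (π : Representation ℂ K V) :
    Representation ℂ G (IndSpace φ π) where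
  toFun g :=
    { toFun := fun f => ⟨fun x => (f : G → V) (g⁻¹ * x), by
        intro x h
        show (f : G → V) (g⁻¹ * (x * φ h)) = π h⁻¹ ((f : G → V) (g⁻¹ * x))
        rw [← mul_assoc]
        exact f.2 (g⁻¹ * x) h⟩
      map_add' := fun a b => Subtype.ext (funext fun x => by simp)
      map_smul' := fun c a => Subtype.ext (funext fun x => by simp) }
  map_one' := LinearMap.ext fun f => Subtype.ext (funext fun x => by simp)
  map_mul' a b := LinearMap.ext fun f => Subtype.ext (funext fun x => by simp [mul_assoc])

/-- A representation is irreducible if it is nonzero and has no nontrivial invariant subspace. -/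
def IsIrreducibleRep {G V : Type*} [Monoid G] [AddCommMonoid V] [Module ℂ V]
    (ρ : Representation ℂ G V) : Prop :=
  Nontrivial V ∧ ∀ p : Submodule ℂ V, (∀ (g : G), ∀ v ∈ p, ρ g v ∈ p) → p = ⊥ ∨ p = ⊤

end

open Pointwise

/-- The representation attached to a `ℂ`-linear action of `G` on `M`. -/
def repOfAction (G M : Type*) [Group G] [AddCommMonoid M] [Module ℂ M]
    [DistribMulAction G M] [SMulCommClass G ℂ M] : Representation ℂ G M where
  toFun g := DistribMulAction.toLinearMap ℂ M g
  map_one' := by ext m; exact one_smul G m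
  map_mul' a b := by ext m; exact mul_smul a b m


section AuxStmt

variable {R : Type} [CommRing R]
  {G : Type} [Group G] [MulSemiringAction G R]
  {M : Type} [AddCommGroup M] [Module R M] [DistribMulAction G M]
  (q : PrimeSpectrum R)

theorem smul_mem_primeCompl' {h : G} (hh : h • q.asIdeal = q.asIdeal) {s : R}
    (hs : s ∈ q.asIdeal.primeCompl) : h • s ∈ q.asIdeal.primeCompl := by
  intro hmem
  apply hs
  have : h • s ∈ h • q.asIdeal := by rw [hh]; exact hmem
  exact Ideal.smul_mem_pointwise_smul_iff.mp this

variable (hcompat : ∀ (g : G) (r : R) (m : M), g • (r • m) = (g • r) • (g • m))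

/-- The semilinear action of an element of the stabilizer of `q` on the localized module. -/
noncomputable def gActFun {h : G} (hh : h • q.asIdeal = q.asIdeal)
    (x : LocalizedModule q.asIdeal.primeCompl M) : LocalizedModule q.asIdeal.primeCompl M :=
  x.liftOn
    (fun p => LocalizedModule.mk (h • p.1) ⟨h • (p.2 : R), smul_mem_primeCompl' q hh p.2.2⟩)
    (by
      rintro ⟨m, s⟩ ⟨m', s'⟩ ⟨u, hu⟩
      refine LocalizedModule.mk_eq.mpr
        ⟨⟨h • (u : R), smul_mem_primeCompl' q hh u.2⟩, ?_⟩
      show (h • (u : R)) • (h • (s' : R)) • (h • m) = (h • (u : R)) • (h • (s : R)) • (h • m')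
      rw [← hcompat, ← hcompat, ← hcompat, ← hcompat]
      exact congrArg (h • ·) hu)

theorem gActFun_mk {h : G} (hh : h • q.asIdeal = q.asIdeal) (m : M)
    (s : q.asIdeal.primeCompl) :
    gActFun q hcompat hh (LocalizedModule.mk m s) =
      LocalizedModule.mk (h • m) ⟨h • (s : R), smul_mem_primeCompl' q hh s.2⟩ :=
  LocalizedModule.liftOn_mk _ _ _

theorem gActFun_add {h : G} (hh : h • q.asIdeal = q.asIdeal)
    (x y : LocalizedModule q.asIdeal.primeCompl M) :
    gActFun q hcompat hh (x + y) = gActFun q hcompat hh x + gActFun q hcompat hh y := by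
  induction x with | _ m s =>
  induction y with | _ m' s' =>
  rw [LocalizedModule.mk_add_mk, gActFun_mk, gActFun_mk, gActFun_mk,
    LocalizedModule.mk_add_mk]
  refine LocalizedModule.mk_eq.mpr ⟨1, ?_⟩
  simp only [Submonoid.smul_def, Submonoid.coe_mul, Submonoid.coe_one, one_smul]
  simp only [← smul_mul', ← hcompat, ← smul_add]

theorem gActFun_rsmul {h : G} (hh : h • q.asIdeal = q.asIdeal) (r : R)
    (x : LocalizedModule q.asIdeal.primeCompl M) :
    gActFun q hcompat hh (r • x) = (h • r) • gActFun q hcompat hh x := by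
  induction x with | _ m s =>
  rw [LocalizedModule.smul'_mk, gActFun_mk, gActFun_mk, LocalizedModule.smul'_mk, hcompat]

theorem gActFun_comp {h h' : G} (hh : h • q.asIdeal = q.asIdeal)
    (hh' : h' • q.asIdeal = q.asIdeal) (hhh : (h * h') • q.asIdeal = q.asIdeal)
    (x : LocalizedModule q.asIdeal.primeCompl M) :
    gActFun q hcompat hh (gActFun q hcompat hh' x) = gActFun q hcompat hhh x := by
  induction x with | _ m s =>
  rw [gActFun_mk, gActFun_mk, gActFun_mk]
  congr 1
  · rw [mul_smul]
  · exact Subtype.ext (mul_smul h h' (s : R)).symm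

theorem gActFun_one (hh : (1 : G) • q.asIdeal = q.asIdeal)
    (x : LocalizedModule q.asIdeal.primeCompl M) :
    gActFun q hcompat hh x = x := by
  induction x with | _ m s =>
  rw [gActFun_mk]
  congr 1
  · rw [one_smul]
  · exact Subtype.ext (one_smul G (s : R))

end AuxStmt

/-- Let `R` be a finite type commutative `ℂ`-algebra, `G` a finite group acting on `R` by
`ℂ`-algebra automorphisms, and `M` a finite-dimensional `ℂ`-vector space which is both an
`R`-module and a `ℂ`-linear `G`-module, compatibly: `g•(r•m) = (g•r)•(g•m)`.  If the
support of `M` in `Spec R` is the `G`-orbit of a point `q`, then the localization `M_q`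
carries a natural `G_q`-action (`ℂ`-linear, semilinear over the `G_q`-action on `R`, and
compatible with the localization map `M → M_q`), and as representations of `G` over `ℂ`,
`M ≅ Ind_{G_q}^{G}(M_q)`. -/
theorem stmt1 {R : Type} [CommRing R] [Algebra ℂ R] (hft : Algebra.FiniteType ℂ R)
    {G : Type} [Group G] [Finite G]
    [MulSemiringAction G R] [SMulCommClass G ℂ R]
    {M : Type} [AddCommGroup M] [Module ℂ M] [FiniteDimensional ℂ M]
    [Module R M] [IsScalarTower ℂ R M]
    [DistribMulAction G M] [SMulCommClass G ℂ M]
    (hcompat : ∀ (g : G) (r : R) (m : M), g • (r • m) = (g • r) • (g • m))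
    (q : PrimeSpectrum R)
    (hsupp : Module.support R M =
      {p : PrimeSpectrum R | ∃ g : G, p.asIdeal = g • q.asIdeal}) :
    letI : Module ℂ (LocalizedModule q.asIdeal.primeCompl M) :=
      Module.compHom _ (algebraMap ℂ R)
    ∃ ρ : Representation ℂ ↥(MulAction.stabilizer G q.asIdeal)
        (LocalizedModule q.asIdeal.primeCompl M),
      (∀ (h : ↥(MulAction.stabilizer G q.asIdeal)) (m : M),
        ρ h (LocalizedModule.mkLinearMap q.asIdeal.primeCompl M m) =
          LocalizedModule.mkLinearMap q.asIdeal.primeCompl M ((h : G) • m)) ∧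
      (∀ (h : ↥(MulAction.stabilizer G q.asIdeal)) (r : R)
          (x : LocalizedModule q.asIdeal.primeCompl M),
        ρ h (r • x) = ((h : G) • r) • ρ h x) ∧
      RepIso (repOfAction G M) (IndRep (MulAction.stabilizer G q.asIdeal).subtype ρ) := by
  classical
  letI instC : Module ℂ (LocalizedModule q.asIdeal.primeCompl M) :=
    Module.compHom _ (algebraMap ℂ R)
  letI instCS : SMul ℂ (LocalizedModule q.asIdeal.primeCompl M) := instC.toSMul
  have hCsmul : ∀ (c : ℂ) (x : LocalizedModule q.asIdeal.primeCompl M),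
      c • x = (algebraMap ℂ R c) • x := fun _ _ => rfl
  have hMsmul : ∀ (c : ℂ) (m : M), c • m = (algebraMap ℂ R c) • m := by
    intro c m
    rw [algebraMap_smul]
  have hfix : ∀ (g : G) (c : ℂ), g • (algebraMap ℂ R c) = algebraMap ℂ R c := by
    intro g c
    rw [Algebra.algebraMap_eq_smul_one, smul_comm, smul_one]
  have hstab : ∀ h : MulAction.stabilizer G q.asIdeal, (h : G) • q.asIdeal = q.asIdeal :=
    fun h => h.2
  let ρL : (MulAction.stabilizer G q.asIdeal) →
      (LocalizedModule q.asIdeal.primeCompl M →ₗ[ℂ] LocalizedModule q.asIdeal.primeCompl M) :=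
    fun h =>
    { toFun := gActFun q hcompat (hstab h)
      map_add' := gActFun_add q hcompat (hstab h)
      map_smul' := by
        intro c x
        simp only [RingHom.id_apply]
        rw [hCsmul, hCsmul, gActFun_rsmul, hfix] }
  let ρ : Representation ℂ (MulAction.stabilizer G q.asIdeal)
      (LocalizedModule q.asIdeal.primeCompl M) :=
    { toFun := ρL
      map_one' := by
        apply LinearMap.ext; intro x
        exact gActFun_one q hcompat (hstab 1) x
      map_mul' := by
        intro h h'
        apply LinearMap.ext; intro x
        exact (gActFun_comp q hcompat (hstab h) (hstab h') (hstab (h * h')) x).symm }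
  have ρ_mk : ∀ (h : MulAction.stabilizer G q.asIdeal) (m : M),
      ρ h (LocalizedModule.mk m 1) = LocalizedModule.mk ((h : G) • m) 1 := by
    intro h m
    show gActFun q hcompat (hstab h) (LocalizedModule.mk m 1) = LocalizedModule.mk ((h : G) • m) 1
    rw [gActFun_mk]
    congr 1
    exact Subtype.ext (smul_one (h : G))
  refine ⟨ρ, ?_, ?_, ?_⟩
  · intro h m
    exact ρ_mk h m
  · intro h r x
    exact gActFun_rsmul q hcompat (hstab h) r x
  -- the zero criterion in the localized module
  have mk_zero_iff : ∀ m : M, LocalizedModule.mk m (1 : q.asIdeal.primeCompl) = 0 ↔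
      ∃ u : q.asIdeal.primeCompl, (u : R) • m = 0 := by
    intro m
    rw [show (0 : LocalizedModule q.asIdeal.primeCompl M) = LocalizedModule.mk 0 1 from
      (LocalizedModule.zero_mk 1).symm, LocalizedModule.mk_eq]
    constructor
    · rintro ⟨u, hu⟩
      exact ⟨u, by simpa [Submonoid.smul_def] using hu⟩
    · rintro ⟨u, hu⟩
      exact ⟨u, by simp [Submonoid.smul_def, hu]⟩
  -- the intertwining map
  let Φ : M →ₗ[ℂ] (IndSpace (MulAction.stabilizer G q.asIdeal).subtype ρ) :=
  { toFun := fun m =>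
      ⟨fun g => LocalizedModule.mk (g⁻¹ • m) 1, by
        intro g h
        show LocalizedModule.mk ((g * ((MulAction.stabilizer G q.asIdeal).subtype h))⁻¹ • m) 1
          = ρ h⁻¹ (LocalizedModule.mk (g⁻¹ • m) 1)
        rw [ρ_mk]
        congr 1
        show (g * (h : G))⁻¹ • m = ((h⁻¹ : MulAction.stabilizer G q.asIdeal) : G) • g⁻¹ • m
        rw [mul_inv_rev, mul_smul]
        rfl⟩
    map_add' := by
      intro x y
      apply Subtype.ext
      funext g
      show LocalizedModule.mk (g⁻¹ • (x + y)) 1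
        = LocalizedModule.mk (g⁻¹ • x) 1 + LocalizedModule.mk (g⁻¹ • y) 1
      rw [smul_add]
      simp only [← LocalizedModule.mkLinearMap_apply, map_add]
    map_smul' := by
      intro c x
      apply Subtype.ext
      funext g
      show LocalizedModule.mk (g⁻¹ • (c • x)) (1 : q.asIdeal.primeCompl)
        = c • LocalizedModule.mk (g⁻¹ • x) (1 : q.asIdeal.primeCompl)
      rw [smul_comm, hCsmul, LocalizedModule.smul'_mk, hMsmul] }
  have Φ_apply : ∀ (m : M) (g : G),
      ((Φ m : G → LocalizedModule q.asIdeal.primeCompl M)) g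
        = LocalizedModule.mk (g⁻¹ • m) 1 := fun _ _ => rfl
  -- injectivity
  have hinj : Function.Injective Φ := by
    refine (injective_iff_map_eq_zero Φ).mpr ?_
    intro m hm
    by_contra hm0
    have hval : ∀ g : G, LocalizedModule.mk (g⁻¹ • m) (1 : q.asIdeal.primeCompl) = 0 := by
      intro g
      have := congrArg
        (fun f : (IndSpace (MulAction.stabilizer G q.asIdeal).subtype ρ) =>
          (f : G → LocalizedModule q.asIdeal.primeCompl M) g) hm
      simpa [Φ_apply] using this
    have hann : (Submodule.span R {m}).annihilator ≠ ⊤ := by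
      intro h
      apply hm0
      have h1 : (1 : R) ∈ (Submodule.span R {m}).annihilator := h ▸ Submodule.mem_top
      have := (Submodule.mem_annihilator_span_singleton m 1).mp h1
      simpa using this
    obtain ⟨p, hpmax, hple⟩ := Ideal.exists_le_maximal _ hann
    have hpsupp : (⟨p, hpmax.isPrime⟩ : PrimeSpectrum R) ∈ Module.support R M :=
      Module.mem_support_iff_exists_annihilator.mpr ⟨m, hple⟩
    rw [hsupp] at hpsupp
    obtain ⟨g, hg⟩ := hpsupp
    obtain ⟨u, hu⟩ := (mk_zero_iff _).mp (hval g)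
    have hkill : (g • (u : R)) • m = 0 := by
      have := congrArg (fun z => g • z) hu
      simpa [hcompat, smul_inv_smul] using this
    have hmem : g • (u : R) ∈ p :=
      hple ((Submodule.mem_annihilator_span_singleton m _).mpr hkill)
    rw [show p = g • q.asIdeal from hg] at hmem
    exact u.2 (Ideal.smul_mem_pointwise_smul_iff.mp hmem)
  have hsurj : Function.Surjective Φ := by
    letI : Fintype G := Fintype.ofFinite G
    -- primes in the orbit are incomparable
    have incomp : ∀ g : G, g • q.asIdeal ≠ q.asIdeal → ¬(g • q.asIdeal ≤ q.asIdeal) := by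
      intro g hne hle
      apply hne
      have hpow : ∀ k : ℕ, g ^ k • q.asIdeal ≤ q.asIdeal := by
        intro k
        induction k with
        | zero => rw [pow_zero, one_smul]
        | succ k ih =>
          rw [pow_succ, mul_smul]
          exact le_trans (smul_mono_right _ hle) ih
      refine le_antisymm hle ?_
      obtain ⟨k, hk⟩ := Nat.exists_eq_succ_of_ne_zero (orderOf_pos g).ne'
      calc q.asIdeal = g ^ (orderOf g) • q.asIdeal := by rw [pow_orderOf_eq_one, one_smul]
        _ = g • (g ^ k • q.asIdeal) := by rw [hk, pow_succ', mul_smul]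
        _ ≤ g • q.asIdeal := smul_mono_right _ (hpow k)
    -- key: elements of the localization at q lift to elements of M supported only on the
    -- stabilizer coset
    have key : ∀ (m₀ : M) (s : q.asIdeal.primeCompl), ∃ m : M,
        LocalizedModule.mk m (1 : q.asIdeal.primeCompl) = LocalizedModule.mk m₀ s ∧
        ∀ u : G, u • q.asIdeal ≠ q.asIdeal →
          LocalizedModule.mk (u • m) (1 : q.asIdeal.primeCompl) = 0 := by
      intro m₀ s
      set B : Finset G := Finset.univ.filter (fun g => g • q.asIdeal ≠ q.asIdeal) with hB
      have hBmem : ∀ g ∈ B, g • q.asIdeal ≠ q.asIdeal := fun g hg => (Finset.mem_filter.mp hg).2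
      have hchoice : ∀ g : G, g • q.asIdeal ≠ q.asIdeal →
          ∃ r, r ∈ g • q.asIdeal ∧ r ∉ q.asIdeal := by
        intro g hg
        obtain ⟨r, hr1, hr2⟩ := SetLike.not_le_iff_exists.mp (incomp g hg)
        exact ⟨r, hr1, hr2⟩
      choose tg htg1 htg2 using hchoice
      set t : R := ∏ g ∈ B.attach, tg g.1 (hBmem g.1 g.2) with ht
      have ht_not : t ∉ q.asIdeal := by
        refine Finset.prod_induction _ (fun r => r ∉ q.asIdeal) ?_ ?_ ?_
        · intro x y hx hy hxy
          rcases q.isPrime.mem_or_mem hxy with h | h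
          · exact hx h
          · exact hy h
        · intro h1
          exact q.isPrime.ne_top ((Ideal.eq_top_iff_one _).mpr h1)
        · intro x _
          exact htg2 x.1 (hBmem x.1 x.2)
      have ht_in : ∀ g, ∀ hg : g ∈ B, t ∈ g • q.asIdeal := by
        intro g hg
        obtain ⟨c, hc⟩ := Finset.dvd_prod_of_mem
          (fun x : {x // x ∈ B} => tg x.1 (hBmem x.1 x.2)) (Finset.mem_attach B ⟨g, hg⟩)
        rw [ht, hc]
        exact Ideal.mul_mem_right _ _ (htg1 g (hBmem g hg))
      set a : R := (s : R) * t with ha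
      have ha_not : a ∉ q.asIdeal := by
        intro hmem
        rcases q.isPrime.mem_or_mem hmem with h | h
        · exact s.2 h
        · exact ht_not h
      have hapow : ∀ k : ℕ, a ^ k ∉ q.asIdeal := fun k hk =>
        ha_not (q.isPrime.mem_of_pow_mem k hk)
      have ha_in : ∀ g, ∀ hg : g ∈ B, a ∈ g • q.asIdeal := fun g hg =>
        Ideal.mul_mem_left _ _ (ht_in g hg)
      -- Fitting decomposition for multiplication by `a`
      let A : Module.End ℂ M :=
      { toFun := fun x => a • x
        map_add' := fun x y => smul_add a x y
        map_smul' := by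
          intro c x
          simp only [RingHom.id_apply]
          rw [hMsmul, hMsmul, smul_smul, smul_smul, mul_comm] }
      let AR : M →ₗ[R] M := LinearMap.lsmul R M a
      have hApow : ∀ (k : ℕ) (x : M), (A ^ k) x = a ^ k • x := by
        intro k
        induction k with
        | zero => intro x; simp
        | succ k ih =>
          intro x
          rw [pow_succ, Module.End.mul_apply, ih]
          show a ^ k • (a • x) = _
          rw [smul_smul, ← pow_succ]
      have hARpow : ∀ (k : ℕ) (x : M), (AR ^ k) x = a ^ k • x := by
        intro k
        induction k with
        | zero => intro x; simp
        | succ k ih =>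
          intro x
          rw [pow_succ, Module.End.mul_apply, ih]
          show a ^ k • (a • x) = _
          rw [smul_smul, ← pow_succ]
      set n := Module.finrank ℂ M with hn
      have hker : LinearMap.ker (A ^ (n + n)) = LinearMap.ker (A ^ n) := by
        rw [Module.End.ker_pow_eq_ker_pow_finrank_of_le (by omega), hn]
      have hker1 : LinearMap.ker (A ^ (n + 1)) = LinearMap.ker (A ^ n) := by
        rw [Module.End.ker_pow_eq_ker_pow_finrank_of_le (by omega), hn]
      have hdisj : Disjoint (LinearMap.ker (A ^ n)) (LinearMap.range (A ^ n)) := by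
        rw [Submodule.disjoint_def]
        intro x hk hr
        obtain ⟨y, hy⟩ := hr
        have hy2 : y ∈ LinearMap.ker (A ^ (n + n)) := by
          rw [LinearMap.mem_ker, pow_add, Module.End.mul_apply, hy]
          exact hk
        rw [hker, LinearMap.mem_ker] at hy2
        rw [← hy, hy2]
      have hrange : LinearMap.range (A ^ (n + 1)) = LinearMap.range (A ^ n) := by
        apply Submodule.eq_of_le_of_finrank_eq
        · rintro x ⟨y, rfl⟩
          exact ⟨A y, by rw [pow_succ, Module.End.mul_apply]⟩
        · have h1 := LinearMap.finrank_range_add_finrank_ker (A ^ (n + 1))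
          have h2 := LinearMap.finrank_range_add_finrank_ker (A ^ n)
          rw [hker1] at h1
          omega
      have hsup : LinearMap.ker (A ^ n) ⊔ LinearMap.range (A ^ n) = ⊤ := by
        apply Submodule.eq_top_of_finrank_eq
        have h3 := Submodule.finrank_sup_add_finrank_inf_eq
          (LinearMap.ker (A ^ n)) (LinearMap.range (A ^ n))
        rw [disjoint_iff.mp hdisj, finrank_bot] at h3
        have h2 := LinearMap.finrank_range_add_finrank_ker (A ^ n)
        omega
      have hm₀ : m₀ ∈ LinearMap.ker (A ^ n) ⊔ LinearMap.range (A ^ n) := by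
        rw [hsup]; trivial
      obtain ⟨m', hm', m'', hm'', hsum⟩ := Submodule.mem_sup.mp hm₀
      rw [← hrange] at hm''
      obtain ⟨z, hz⟩ := hm''
      have hAy : a • ((A ^ n) z) = m'' := by
        rw [← hz, pow_succ', Module.End.mul_apply]
        rfl
      refine ⟨t • ((A ^ n) z), ?_, ?_⟩
      · rw [LocalizedModule.mk_eq]
        refine ⟨⟨a ^ n, hapow n⟩, ?_⟩
        simp only [Submonoid.smul_def, Submonoid.coe_one, one_smul]
        have hsm : (s : R) • (t • ((A ^ n) z)) = m'' := by
          rw [smul_smul]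
          exact hAy
        have hker0 : a ^ n • m' = 0 := by
          have hm'0 := hm'
          rw [LinearMap.mem_ker] at hm'0
          rw [← hApow, hm'0]
        rw [hsm, ← hsum, smul_add, hker0, zero_add]
      · intro u hu
        have hginv : u⁻¹ • q.asIdeal ≠ q.asIdeal := by
          intro h
          apply hu
          have h2 := congrArg (fun I => u • I) h
          simpa [smul_inv_smul] using h2.symm
        have hgB : u⁻¹ ∈ B := Finset.mem_filter.mpr ⟨Finset.mem_univ _, hginv⟩
        set W : Submodule R M := LinearMap.range (AR ^ n) with hW
        have hWiff : ∀ x : M, x ∈ W ↔ x ∈ LinearMap.range (A ^ n) := by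
          intro x
          constructor
          · rintro ⟨z', rfl⟩
            exact ⟨z', by rw [hApow, hARpow]⟩
          · rintro ⟨z', rfl⟩
            exact ⟨z', by rw [hARpow, hApow]⟩
        haveI : Module.Finite R M := Module.Finite.of_restrictScalars_finite ℂ R M
        have hWfg : W.FG := by
          rw [hW, LinearMap.range_eq_map]
          exact Submodule.FG.map _ (Module.finite_def.mp inferInstance)
        have hle : W ≤ Ideal.span {a} • W := by
          intro w hw
          rw [hWiff, ← hrange] at hw
          obtain ⟨z', hz'⟩ := hw
          have h1 : w = a • ((A ^ n) z') := by
            rw [← hz', pow_succ', Module.End.mul_apply]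
            rfl
          rw [h1]
          exact Submodule.smul_mem_smul (Ideal.mem_span_singleton_self a)
            ((hWiff _).mpr ⟨z', rfl⟩)
        obtain ⟨r, hr1, hr0⟩ :=
          Submodule.exists_sub_one_mem_and_smul_eq_zero_of_fg_of_le_smul
            (Ideal.span {a}) W hWfg hle
        haveI : (u⁻¹ • q.asIdeal).IsPrime := Ideal.IsPrime.smul u⁻¹
        have hrq : r ∉ u⁻¹ • q.asIdeal := by
          intro hr
          have hr1' : r - 1 ∈ u⁻¹ • q.asIdeal :=
            ((Ideal.span_singleton_le_iff_mem _).mpr (ha_in u⁻¹ hgB)) hr1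
          have h1mem : (1 : R) ∈ u⁻¹ • q.asIdeal := by
            have h2 := Ideal.sub_mem _ hr hr1'
            simpa using h2
          exact (Ideal.IsPrime.ne_top inferInstance) ((Ideal.eq_top_iff_one _).mpr h1mem)
        have hry : r • ((A ^ n) z) = 0 := hr0 _ ((hWiff _).mpr ⟨z, rfl⟩)
        have hrm : r • (t • ((A ^ n) z)) = 0 := by
          rw [smul_smul, mul_comm, ← smul_smul, hry, smul_zero]
        rw [mk_zero_iff]
        refine ⟨⟨u • r, ?_⟩, ?_⟩
        · intro hmem
          exact hrq (Ideal.mem_inv_pointwise_smul_iff.mpr hmem)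
        · show (u • r) • (u • (t • ((A ^ n) z))) = 0
          rw [← hcompat, hrm, smul_zero]
    -- now assemble the surjectivity from the delta functions
    have key' : ∀ x : LocalizedModule q.asIdeal.primeCompl M, ∃ m : M,
        LocalizedModule.mk m (1 : q.asIdeal.primeCompl) = x ∧
        ∀ u : G, u • q.asIdeal ≠ q.asIdeal →
          LocalizedModule.mk (u • m) (1 : q.asIdeal.primeCompl) = 0 := by
      intro x
      induction x with | _ m₀ s => exact key m₀ s
    intro fh
    have hδ : ∀ g₀ : G, ∃ m : M, ∀ g : G,
        LocalizedModule.mk (g⁻¹ • m) (1 : q.asIdeal.primeCompl)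
          = if h : g⁻¹ * g₀ ∈ MulAction.stabilizer G q.asIdeal
            then ρ ⟨g⁻¹ * g₀, h⟩ ((fh : G → LocalizedModule q.asIdeal.primeCompl M) g₀)
            else 0 := by
      intro g₀
      obtain ⟨m₁, hm₁, hkill⟩ := key' ((fh : G → LocalizedModule q.asIdeal.primeCompl M) g₀)
      refine ⟨g₀ • m₁, ?_⟩
      intro g
      have hsm : g⁻¹ • (g₀ • m₁) = (g⁻¹ * g₀) • m₁ := (mul_smul _ _ _).symm
      by_cases h : g⁻¹ * g₀ ∈ MulAction.stabilizer G q.asIdeal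
      · rw [dif_pos h, hsm, ← hm₁]
        exact (ρ_mk ⟨g⁻¹ * g₀, h⟩ m₁).symm
      · rw [dif_neg h, hsm]
        refine hkill _ ?_
        rwa [MulAction.mem_stabilizer_iff] at h
    choose mδ hmδ using hδ
    set c : ℕ :=
      (Finset.univ.filter (fun x : G => x ∈ MulAction.stabilizer G q.asIdeal)).card with hcdef
    have hc0 : c ≠ 0 := by
      have h1 : (1 : G) ∈ Finset.univ.filter
          (fun x : G => x ∈ MulAction.stabilizer G q.asIdeal) :=
        Finset.mem_filter.mpr ⟨Finset.mem_univ _, (MulAction.stabilizer G q.asIdeal).one_mem⟩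
      rw [hcdef]
      exact Finset.card_ne_zero_of_mem h1
    refine ⟨(c : ℂ)⁻¹ • ∑ g₀ : G, mδ g₀, ?_⟩
    have hΦsum : ∀ g : G, ((Φ (∑ g₀ : G, mδ g₀) :
        G → LocalizedModule q.asIdeal.primeCompl M)) g
          = c • ((fh : G → LocalizedModule q.asIdeal.primeCompl M) g) := by
      intro g
      rw [Φ_apply, Finset.smul_sum]
      have h2 : LocalizedModule.mk (∑ g₀ : G, g⁻¹ • mδ g₀) (1 : q.asIdeal.primeCompl)
          = ∑ g₀ : G, LocalizedModule.mk (g⁻¹ • mδ g₀) 1 := by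
        simp only [← LocalizedModule.mkLinearMap_apply, map_sum]
      rw [h2]
      have h3 : ∀ g₀ : G, LocalizedModule.mk (g⁻¹ • mδ g₀) (1 : q.asIdeal.primeCompl)
          = if g⁻¹ * g₀ ∈ MulAction.stabilizer G q.asIdeal
            then (fh : G → LocalizedModule q.asIdeal.primeCompl M) g else 0 := by
        intro g₀
        rw [hmδ g₀ g]
        by_cases h : g⁻¹ * g₀ ∈ MulAction.stabilizer G q.asIdeal
        · rw [dif_pos h, if_pos h]
          have hfg := fh.2 g (⟨g⁻¹ * g₀, h⟩ : MulAction.stabilizer G q.asIdeal)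
          have hgg : g * (g⁻¹ * g₀) = g₀ := by group
          rw [show (MulAction.stabilizer G q.asIdeal).subtype ⟨g⁻¹ * g₀, h⟩ = g⁻¹ * g₀ from rfl,
            hgg] at hfg
          rw [hfg, ← Module.End.mul_apply, ← map_mul, mul_inv_cancel, map_one,
            Module.End.one_apply]
        · rw [dif_neg h, if_neg h]
      rw [Finset.sum_congr rfl (fun g₀ _ => h3 g₀), Finset.sum_ite, Finset.sum_const,
        Finset.sum_const_zero, add_zero]
      congr 1
      rw [hcdef]
      apply Finset.card_bij (fun g₀ _ => g⁻¹ * g₀)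
      · intro x hx
        exact Finset.mem_filter.mpr ⟨Finset.mem_univ _, (Finset.mem_filter.mp hx).2⟩
      · intro x hx y hy hxy
        exact mul_left_cancel hxy
      · intro y hy
        refine ⟨g * y, Finset.mem_filter.mpr ⟨Finset.mem_univ _, ?_⟩, by group⟩
        simpa using (Finset.mem_filter.mp hy).2
    apply Subtype.ext
    funext g
    have hcoe : ((Φ ((c : ℂ)⁻¹ • ∑ g₀ : G, mδ g₀) :
        G → LocalizedModule q.asIdeal.primeCompl M)) g
          = (c : ℂ)⁻¹ • ((Φ (∑ g₀ : G, mδ g₀) :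
            G → LocalizedModule q.asIdeal.primeCompl M)) g := by
      rw [map_smul]
      rfl
    rw [hcoe, hΦsum g, ← Nat.cast_smul_eq_nsmul ℂ]
    exact @inv_smul_smul₀ ℂ (LocalizedModule q.asIdeal.primeCompl M) _
      instC.toDistribMulAction.toMulAction (c : ℂ) (Nat.cast_ne_zero.mpr hc0) _
  let e := LinearEquiv.ofBijective Φ ⟨hinj, hsurj⟩
  refine ⟨e, ?_⟩
  intro g v
  apply Subtype.ext
  funext x
  show LocalizedModule.mk (x⁻¹ • (g • v)) 1 = LocalizedModule.mk ((g⁻¹ * x)⁻¹ • v) 1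
  congr 1
  rw [mul_inv_rev, inv_inv, mul_smul]
end

section
/- Let n = g + m with g, m ≥ 0 integers. Let the symmetric group S_n act on the polynomial ring ℂ[X_1,…,X_n,Y_1,…,Y_n] by simultaneously permuting the X-variables and the Y-variables, and let S_m act on ℂ[Z_1,…,Z_m,T_1,…,T_m] in the same diagonal way. Let φ : ℂ[X_1,…,X_n,Y_1,…,Y_n] → ℂ[Z_1,…,Z_m,T_1,…,T_m] be the ℂ-algebra homomorphism sending X_i ↦ 0 and Y_i ↦ 0 for 1 ≤ i ≤ g, and X_{g+j} ↦ Z_j, Y_{g+j} ↦ T_j for 1 ≤ j ≤ m. Then the image under φ of the invariant subalgebra ℂ[X_1,…,X_n,Y_1,…,Y_n]^{S_n} is exactly the invariant subalgebra ℂ[Z_1,…,Z_m,T_1,…,T_m]^{S_m}. -/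
open MvPolynomial Equiv Finset Nat

theorem extPerm {α : Type*} [Fintype α] [DecidableEq α] (A : Finset α) (f : α → α)
    (hf : Set.InjOn f A) : ∃ σ : Equiv.Perm α, ∀ a ∈ A, σ a = f a := by
  have hcard : (A.image f).card = A.card := Finset.card_image_of_injOn hf
  have hbij : Function.Bijective (fun x : {x // x ∈ A} =>
      (⟨f x.1, Finset.mem_image_of_mem f x.2⟩ : {x // x ∈ A.image f})) := by
    rw [Fintype.bijective_iff_injective_and_card]
    constructor
    · rintro ⟨x, hx⟩ ⟨y, hy⟩ h
      simp only [Subtype.mk.injEq] at h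
      exact Subtype.ext (hf hx hy h)
    · rw [Fintype.card_coe, Fintype.card_coe, hcard]
  let e : {x // x ∈ A} ≃ {x // x ∈ A.image f} := Equiv.ofBijective _ hbij
  refine ⟨e.extendSubtype, fun a ha => ?_⟩
  rw [e.extendSubtype_apply_of_mem a ha]
  rfl

theorem countExt {α : Type*} [Fintype α] [DecidableEq α] (A : Finset α) (τ₀ : Equiv.Perm α)
    {P : Equiv.Perm α → Prop} [DecidablePred P] (hP : ∀ τ, P τ ↔ ∀ a ∈ A, τ a = τ₀ a) :
    (Finset.univ.filter P).card = Nat.factorial (Fintype.card α - A.card) := by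
  classical
  have hfix : ∀ τ : Perm α, (∀ a ∈ A, τ a = τ₀ a) → ∀ x, x ∉ A ↔ (τ₀⁻¹ * τ) x ∉ A := by
    intro τ hτ x
    have hfixA : ∀ a ∈ A, (τ₀⁻¹ * τ) a = a := by
      intro a ha; simp [Perm.mul_apply, hτ a ha]
    constructor
    · intro hx hmem
      have h2 := hfixA _ hmem
      exact hx (((τ₀⁻¹ * τ).injective h2) ▸ hmem)
    · intro hx hmem
      exact hx (by rw [hfixA x hmem]; exact hmem)
  have hcard : Fintype.card {x // x ∉ A} = Fintype.card α - A.card := by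
    rw [Fintype.card_subtype_compl, Fintype.card_coe]
  rw [← hcard, ← Fintype.card_perm, ← Finset.card_univ]
  refine (Finset.card_bij (fun π _ => τ₀ * Equiv.Perm.ofSubtype π) ?_ ?_ ?_).symm
  · intro π _
    simp only [Finset.mem_filter, Finset.mem_univ, true_and, hP]
    intro a ha
    rw [Perm.mul_apply, Equiv.Perm.ofSubtype_apply_of_not_mem π (by simp [ha])]
  · intro π₁ _ π₂ _ h
    have h2 : Equiv.Perm.ofSubtype π₁ = Equiv.Perm.ofSubtype π₂ := mul_left_cancel h
    ext x
    have h3 := congrArg (fun (f : Perm α) => f (x : α)) h2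
    simpa using h3
  · intro τ hτ
    simp only [Finset.mem_filter, Finset.mem_univ, true_and, hP] at hτ
    refine ⟨Equiv.Perm.subtypePerm (τ₀⁻¹ * τ) (fun x => (hfix τ hτ x).symm), Finset.mem_univ _, ?_⟩
    show τ₀ * Equiv.Perm.ofSubtype _ = τ
    rw [Equiv.Perm.ofSubtype_subtypePerm]
    · group
    · intro x hx
      by_contra hmem
      exact hx (by simp [Perm.mul_apply, hτ x hmem])


noncomputable section StmtAux

variable (g m : ℕ)

def auxV : Fin (g+m) ⊕ Fin (g+m) → MvPolynomial (Fin m ⊕ Fin m) ℂ :=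
  Sum.elim
    (Fin.addCases (fun _ : Fin g => (0 : MvPolynomial (Fin m ⊕ Fin m) ℂ))
      (fun j : Fin m => X (Sum.inl j)))
    (Fin.addCases (fun _ : Fin g => (0 : MvPolynomial (Fin m ⊕ Fin m) ℂ))
      (fun j : Fin m => X (Sum.inr j)))

def auxPhi : MvPolynomial (Fin (g+m) ⊕ Fin (g+m)) ℂ →ₐ[ℂ] MvPolynomial (Fin m ⊕ Fin m) ℂ :=
  aeval (auxV g m)

def auxLift (σ : Perm (Fin m)) : Perm (Fin (g+m)) :=
  finSumFinEquiv.permCongr (Equiv.sumCongr (Equiv.refl (Fin g)) σ)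

theorem auxLift_natAdd (σ : Perm (Fin m)) (j : Fin m) :
    auxLift g m σ (Fin.natAdd g j) = Fin.natAdd g (σ j) := by
  simp [auxLift, Equiv.permCongr_apply, finSumFinEquiv_symm_apply_natAdd,
    finSumFinEquiv_apply_right]

theorem auxLift_castAdd (σ : Perm (Fin m)) (x : Fin g) :
    auxLift g m σ (Fin.castAdd m x) = Fin.castAdd m x := by
  simp [auxLift, Equiv.permCongr_apply, finSumFinEquiv_symm_apply_castAdd,
    finSumFinEquiv_apply_left]

theorem auxV_inl_natAdd (j : Fin m) : auxV g m (Sum.inl (Fin.natAdd g j)) = X (Sum.inl j) := by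
  simp [auxV]

theorem auxV_inr_natAdd (j : Fin m) : auxV g m (Sum.inr (Fin.natAdd g j)) = X (Sum.inr j) := by
  simp [auxV]

theorem auxV_inl_castAdd (x : Fin g) : auxV g m (Sum.inl (Fin.castAdd m x)) = 0 := by
  simp [auxV]

theorem auxV_inr_castAdd (x : Fin g) : auxV g m (Sum.inr (Fin.castAdd m x)) = 0 := by
  simp [auxV]

theorem auxPhi_comm (σ : Perm (Fin m)) :
    (rename (Sum.map ⇑σ ⇑σ)).comp (auxPhi g m)
      = (auxPhi g m).comp
        (rename (Sum.map ⇑(auxLift g m σ) ⇑(auxLift g m σ))) := by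
  apply MvPolynomial.algHom_ext
  intro i
  rcases i with k | k
  · simp only [AlgHom.comp_apply, auxPhi, aeval_X, rename_X, Sum.map_inl]
    induction k using Fin.addCases with
    | left x => rw [auxLift_castAdd, auxV_inl_castAdd]; simp
    | right j => rw [auxLift_natAdd, auxV_inl_natAdd, auxV_inl_natAdd, rename_X]; simp
  · simp only [AlgHom.comp_apply, auxPhi, aeval_X, rename_X, Sum.map_inr]
    induction k using Fin.addCases with
    | left x => rw [auxLift_castAdd, auxV_inr_castAdd]; simp
    | right j => rw [auxLift_natAdd, auxV_inr_natAdd, auxV_inr_natAdd, rename_X]; simp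

theorem auxForward (a : MvPolynomial (Fin (g+m) ⊕ Fin (g+m)) ℂ)
    (ha : ∀ τ : Perm (Fin (g+m)), rename (Sum.map ⇑τ ⇑τ) a = a) (σ : Perm (Fin m)) :
    rename (Sum.map ⇑σ ⇑σ) (auxPhi g m a) = auxPhi g m a := by
  have h := congrArg (fun f : MvPolynomial (Fin (g+m) ⊕ Fin (g+m)) ℂ →ₐ[ℂ]
      MvPolynomial (Fin m ⊕ Fin m) ℂ => f a) (auxPhi_comm g m σ)
  simp only [AlgHom.comp_apply] at h
  rw [h, ha]


theorem auxV_inl_low (k : Fin (g+m)) (hk : (k:ℕ) < g) : auxV g m (Sum.inl k) = 0 := by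
  have : k = Fin.castAdd m ⟨(k:ℕ), hk⟩ := by ext; rfl
  rw [this, auxV_inl_castAdd]
theorem auxV_inr_low (k : Fin (g+m)) (hk : (k:ℕ) < g) : auxV g m (Sum.inr k) = 0 := by
  have : k = Fin.castAdd m ⟨(k:ℕ), hk⟩ := by ext; rfl
  rw [this, auxV_inr_castAdd]

theorem auxExpand (d : (Fin m ⊕ Fin m) →₀ ℕ) (u : Fin m → Fin (g+m)) :
    auxPhi g m (rename (Sum.map u u) (monomial d (1:ℂ)))
      = d.prod (fun i k => (auxV g m (Sum.map u u i)) ^ k) := by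
  rw [auxPhi, aeval_rename, aeval_monomial, map_one, one_mul]
  rfl

theorem auxCC (d : (Fin m ⊕ Fin m) →₀ ℕ) (τ : Perm (Fin (g+m))) (σ : Perm (Fin m))
    (h : ∀ x ∈ d.support.image (Sum.elim id id),
      τ (Fin.natAdd g x) = Fin.natAdd g (σ x)) :
    auxPhi g m (rename (Sum.map (⇑τ ∘ Fin.natAdd g) (⇑τ ∘ Fin.natAdd g)) (monomial d 1))
      = rename (Sum.map ⇑σ ⇑σ) (monomial d (1:ℂ)) := by
  rw [auxExpand, rename_monomial, monomial_eq, map_one, one_mul,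
    Finsupp.prod_mapDomain_index_inj (σ.injective.sumMap σ.injective)]
  apply Finsupp.prod_congr
  intro i hi
  rcases i with x | x
  · have hx : x ∈ d.support.image (Sum.elim id id) :=
      Finset.mem_image_of_mem _ hi
    simp only [Sum.map_inl, Function.comp_apply]
    rw [h x hx, auxV_inl_natAdd]
  · have hx : x ∈ d.support.image (Sum.elim id id) :=
      Finset.mem_image_of_mem _ hi
    simp only [Sum.map_inr, Function.comp_apply]
    rw [h x hx, auxV_inr_natAdd]

theorem auxVanish (d : (Fin m ⊕ Fin m) →₀ ℕ) (τ : Perm (Fin (g+m))) (x : Fin m)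
    (hx : x ∈ d.support.image (Sum.elim id id)) (hlt : (τ (Fin.natAdd g x) : ℕ) < g) :
    auxPhi g m (rename (Sum.map (⇑τ ∘ Fin.natAdd g) (⇑τ ∘ Fin.natAdd g))
      (monomial d (1:ℂ))) = 0 := by
  rw [auxExpand]
  obtain ⟨i₀, hi₀, hix⟩ := Finset.mem_image.mp hx
  refine Finset.prod_eq_zero hi₀ ?_
  have hd : d i₀ ≠ 0 := Finsupp.mem_support_iff.mp hi₀
  rcases i₀ with x' | x'
  · have : x' = x := hix
    subst this
    simp only [Sum.map_inl, Function.comp_apply]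
    rw [auxV_inl_low _ _ _ hlt, zero_pow hd]
  · have : x' = x := hix
    subst this
    simp only [Sum.map_inr, Function.comp_apply]
    rw [auxV_inr_low _ _ _ hlt, zero_pow hd]

-- notation setup
def auxS (d : (Fin m ⊕ Fin m) →₀ ℕ) : Finset (Fin m) := d.support.image (Sum.elim id id)

variable {m} in
theorem mem_auxS_of_mem_support {d : (Fin m ⊕ Fin m) →₀ ℕ} {i : Fin m ⊕ Fin m}
    (hi : i ∈ d.support) : Sum.elim id id i ∈ auxS m d := Finset.mem_image_of_mem _ hi

def auxExtm (d : (Fin m ⊕ Fin m) →₀ ℕ) (γ : {x // x ∈ auxS m d} → Fin m) : Fin m → Fin m :=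
  fun i => if h : i ∈ auxS m d then γ ⟨i, h⟩ else i

def auxExtn (d : (Fin m ⊕ Fin m) →₀ ℕ) (δ : {x // x ∈ auxS m d} → Fin (g+m)) :
    Fin m → Fin (g+m) :=
  fun i => if h : i ∈ auxS m d then δ ⟨i, h⟩ else Fin.natAdd g i

def auxQ (d : (Fin m ⊕ Fin m) →₀ ℕ) (γ : {x // x ∈ auxS m d} → Fin m) :
    MvPolynomial (Fin m ⊕ Fin m) ℂ :=
  rename (Sum.map (auxExtm m d γ) (auxExtm m d γ)) (monomial d (1:ℂ))

def auxR (d : (Fin m ⊕ Fin m) →₀ ℕ) (δ : {x // x ∈ auxS m d} → Fin (g+m)) :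
    MvPolynomial (Fin m ⊕ Fin m) ℂ :=
  auxPhi g m (rename (Sum.map (auxExtn g m d δ) (auxExtn g m d δ)) (monomial d (1:ℂ)))

def auxr (d : (Fin m ⊕ Fin m) →₀ ℕ) (σ : Perm (Fin m)) : {x // x ∈ auxS m d} → Fin m :=
  fun x => σ x.1

def auxr' (d : (Fin m ⊕ Fin m) →₀ ℕ) (τ : Perm (Fin (g+m))) :
    {x // x ∈ auxS m d} → Fin (g+m) :=
  fun x => τ (Fin.natAdd g x.1)

theorem auxRename_congr {β : Type*} (d : (Fin m ⊕ Fin m) →₀ ℕ) (f f' : Fin m → β)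
    (h : ∀ x ∈ auxS m d, f x = f' x) :
    rename (Sum.map f f) (monomial d (1:ℂ)) = rename (Sum.map f' f') (monomial d 1) := by
  rw [rename_monomial, rename_monomial]
  congr 2
  apply Finsupp.mapDomain_congr
  intro i hi
  rcases i with x | x
  · simp only [Sum.map_inl]
    rw [h x (mem_auxS_of_mem_support hi)]
  · simp only [Sum.map_inr]
    rw [h x (mem_auxS_of_mem_support hi)]

theorem auxR_r' (d : (Fin m ⊕ Fin m) →₀ ℕ) (τ : Perm (Fin (g+m))) :
    auxR g m d (auxr' g m d τ)
      = auxPhi g m (rename (Sum.map (⇑τ ∘ Fin.natAdd g) (⇑τ ∘ Fin.natAdd g))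
          (monomial d (1:ℂ))) := by
  unfold auxR
  congr 1
  apply auxRename_congr
  intro x hx
  simp [auxExtn, auxr', dif_pos hx]

theorem auxQ_r (d : (Fin m ⊕ Fin m) →₀ ℕ) (σ : Perm (Fin m)) :
    auxQ m d (auxr m d σ) = rename (Sum.map ⇑σ ⇑σ) (monomial d (1:ℂ)) := by
  unfold auxQ
  apply auxRename_congr
  intro x hx
  simp [auxExtm, auxr, dif_pos hx]

theorem natAdd_inj : Function.Injective (Fin.natAdd g : Fin m → Fin (g+m)) := by
  intro a b h
  have := congrArg Fin.val h
  simp only [Fin.coe_natAdd] at this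
  exact Fin.ext (by omega)

theorem auxFiber' (d : (Fin m ⊕ Fin m) →₀ ℕ) (τ₀ : Perm (Fin (g+m))) :
    (Finset.univ.filter fun τ : Perm (Fin (g+m)) => auxr' g m d τ = auxr' g m d τ₀).card
      = Nat.factorial (g + m - (auxS m d).card) := by
  classical
  have h2 := countExt ((auxS m d).image (Fin.natAdd g)) τ₀ (P := fun τ => auxr' g m d τ = auxr' g m d τ₀) ?_
  · rw [Fintype.card_fin, Finset.card_image_of_injective _ (natAdd_inj g m)] at h2
    exact h2
  · intro τ
    constructor
    · intro h a ha
      obtain ⟨x, hx, rfl⟩ := Finset.mem_image.mp ha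
      exact congrFun h ⟨x, hx⟩
    · intro h
      funext x
      exact h _ (Finset.mem_image_of_mem _ x.2)

theorem auxFiber (d : (Fin m ⊕ Fin m) →₀ ℕ) (σ₀ : Perm (Fin m)) :
    (Finset.univ.filter fun σ : Perm (Fin m) => auxr m d σ = auxr m d σ₀).card
      = Nat.factorial (m - (auxS m d).card) := by
  classical
  have h2 := countExt (auxS m d) σ₀ (P := fun σ => auxr m d σ = auxr m d σ₀) ?_
  · rw [Fintype.card_fin] at h2
    exact h2
  · intro σ
    constructor
    · intro h a ha
      exact congrFun h ⟨a, ha⟩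
    · intro h
      funext x
      exact h _ x.2

end StmtAux

noncomputable section Core
variable (g m : ℕ)

def toGamma (d : (Fin m ⊕ Fin m) →₀ ℕ) (δ : {x // x ∈ auxS m d} → Fin (g+m)) :
    {x // x ∈ auxS m d} → Fin m :=
  fun x => if h : g ≤ ((δ x : Fin (g+m)) : ℕ)
    then Fin.subNat g (Fin.cast (add_comm g m) (δ x)) h else x.1

def toDelta (d : (Fin m ⊕ Fin m) →₀ ℕ) (γ : {x // x ∈ auxS m d} → Fin m) :
    {x // x ∈ auxS m d} → Fin (g+m) :=
  fun x => Fin.natAdd g (γ x)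

theorem auxCore (d : (Fin m ⊕ Fin m) →₀ ℕ) :
    ∑ δ ∈ Finset.univ.image (auxr' g m d), auxR g m d δ
      = ∑ γ ∈ Finset.univ.image (auxr m d), auxQ m d γ := by
  classical
  rw [← Finset.sum_filter_of_ne (s := Finset.univ.image (auxr' g m d))
    (p := fun δ => ∀ x, g ≤ ((δ x : Fin (g+m)) : ℕ)) (f := auxR g m d) ?_]
  swap
  · -- vanishing outside the filter
    intro δ hA hne
    by_contra hnh
    push_neg at hnh
    obtain ⟨x, hx⟩ := hnh
    obtain ⟨τ, -, hτ⟩ := Finset.mem_image.mp hA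
    apply hne
    rw [← hτ, auxR_r']
    exact auxVanish g m d τ x.1 x.2 (by rw [show τ (Fin.natAdd g x.1) = δ x from congrFun hτ x]; omega)
  -- the bijection
  apply Finset.sum_nbij' (i := toGamma g m d) (j := toDelta g m d)
  · -- hi
    intro δ hδ
    obtain ⟨hA, hHigh⟩ := Finset.mem_filter.mp hδ
    obtain ⟨τ, -, hτ⟩ := Finset.mem_image.mp hA
    have γinj : Function.Injective (toGamma g m d δ) := by
      intro x y h
      have hx := hHigh x
      have hy := hHigh y
      unfold toGamma at h
      rw [dif_pos hx, dif_pos hy] at h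
      have hval := congrArg Fin.val h
      simp only [Fin.subNat, Fin.coe_cast] at hval
      have hδeq : δ x = δ y := Fin.ext (by omega)
      have : τ (Fin.natAdd g x.1) = τ (Fin.natAdd g y.1) := by
        rw [show τ (Fin.natAdd g x.1) = δ x from congrFun hτ x,
          show τ (Fin.natAdd g y.1) = δ y from congrFun hτ y, hδeq]
      exact Subtype.ext (natAdd_inj g m (τ.injective this))
    have hInjOn : Set.InjOn (auxExtm m d (toGamma g m d δ)) (auxS m d) := by
      intro a ha b hb h
      unfold auxExtm at h
      rw [dif_pos (Finset.mem_coe.mp ha), dif_pos (Finset.mem_coe.mp hb)] at h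
      exact congrArg Subtype.val (γinj h)
    obtain ⟨σ, hσ⟩ := extPerm (auxS m d) _ hInjOn
    refine Finset.mem_image.mpr ⟨σ, Finset.mem_univ _, ?_⟩
    funext x
    rw [show auxr m d σ x = σ x.1 from rfl, hσ x.1 x.2]
    unfold auxExtm
    rw [dif_pos x.2]
  · -- hj
    intro γ hγ
    obtain ⟨σ, -, hσ⟩ := Finset.mem_image.mp hγ
    refine Finset.mem_filter.mpr ⟨?_, ?_⟩
    · refine Finset.mem_image.mpr ⟨auxLift g m σ, Finset.mem_univ _, ?_⟩
      funext x
      show auxLift g m σ (Fin.natAdd g x.1) = Fin.natAdd g (γ x)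
      rw [auxLift_natAdd, show σ x.1 = γ x from congrFun hσ x]
    · intro x
      show g ≤ ((Fin.natAdd g (γ x) : Fin (g+m)) : ℕ)
      simp
  · -- left_inv
    intro δ hδ
    obtain ⟨-, hHigh⟩ := Finset.mem_filter.mp hδ
    funext x
    show Fin.natAdd g (toGamma g m d δ x) = δ x
    unfold toGamma
    rw [dif_pos (hHigh x)]
    have := hHigh x
    exact Fin.ext (by simp [Fin.subNat]; omega)
  · -- right_inv
    intro γ hγ
    funext x
    show toGamma g m d (toDelta g m d γ) x = γ x
    unfold toGamma toDelta
    rw [dif_pos (by simp)]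
    exact Fin.ext (by simp [Fin.subNat])
  · -- values
    intro δ hδ
    obtain ⟨hA, hHigh⟩ := Finset.mem_filter.mp hδ
    obtain ⟨τ, -, hτ⟩ := Finset.mem_image.mp hA
    have γinj : Function.Injective (toGamma g m d δ) := by
      intro x y h
      have hx := hHigh x
      have hy := hHigh y
      unfold toGamma at h
      rw [dif_pos hx, dif_pos hy] at h
      have hval := congrArg Fin.val h
      simp only [Fin.subNat, Fin.coe_cast] at hval
      have hδeq : δ x = δ y := Fin.ext (by omega)
      have : τ (Fin.natAdd g x.1) = τ (Fin.natAdd g y.1) := by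
        rw [show τ (Fin.natAdd g x.1) = δ x from congrFun hτ x,
          show τ (Fin.natAdd g y.1) = δ y from congrFun hτ y, hδeq]
      exact Subtype.ext (natAdd_inj g m (τ.injective this))
    have hInjOn : Set.InjOn (auxExtm m d (toGamma g m d δ)) (auxS m d) := by
      intro a ha b hb h
      unfold auxExtm at h
      rw [dif_pos (Finset.mem_coe.mp ha), dif_pos (Finset.mem_coe.mp hb)] at h
      exact congrArg Subtype.val (γinj h)
    obtain ⟨σ, hσ⟩ := extPerm (auxS m d) _ hInjOn
    have hrσ : auxr m d σ = toGamma g m d δ := by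
      funext x
      rw [show auxr m d σ x = σ x.1 from rfl, hσ x.1 x.2]
      unfold auxExtm
      rw [dif_pos x.2]
    have hcc : ∀ x ∈ d.support.image (Sum.elim id id),
        τ (Fin.natAdd g x) = Fin.natAdd g (σ x) := by
      intro x hx
      have h1 : τ (Fin.natAdd g x) = δ ⟨x, hx⟩ := congrFun hτ ⟨x, hx⟩
      have h2 : σ x = toGamma g m d δ ⟨x, hx⟩ := congrFun hrσ ⟨x, hx⟩
      have hh := hHigh ⟨x, hx⟩
      unfold toGamma at h2
      rw [dif_pos hh] at h2
      refine Fin.ext ?_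
      rw [h1]
      have := congrArg Fin.val h2
      simp only [Fin.subNat, Fin.coe_cast] at this
      simp only [Fin.coe_natAdd, this]
      omega
    calc auxR g m d δ = auxR g m d (auxr' g m d τ) := by rw [hτ]
      _ = auxPhi g m (rename (Sum.map (⇑τ ∘ Fin.natAdd g) (⇑τ ∘ Fin.natAdd g))
            (monomial d (1:ℂ))) := auxR_r' g m d τ
      _ = rename (Sum.map ⇑σ ⇑σ) (monomial d (1:ℂ)) := auxCC g m d τ σ hcc
      _ = auxQ m d (auxr m d σ) := (auxQ_r m d σ).symm
      _ = auxQ m d (toGamma g m d δ) := by rw [hrσ]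

end Core

noncomputable section StepA
variable (g m : ℕ)

theorem auxStepA (d : (Fin m ⊕ Fin m) →₀ ℕ) :
    Nat.factorial (m - (auxS m d).card) •
        ∑ τ : Perm (Fin (g+m)), auxPhi g m (rename
          (Sum.map (⇑τ ∘ Fin.natAdd g) (⇑τ ∘ Fin.natAdd g)) (monomial d (1:ℂ)))
      = Nat.factorial (g + m - (auxS m d).card) •
        ∑ σ : Perm (Fin m), rename (Sum.map ⇑σ ⇑σ) (monomial d (1:ℂ)) := by
  classical
  have hL : ∑ τ : Perm (Fin (g+m)), auxPhi g m (rename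
        (Sum.map (⇑τ ∘ Fin.natAdd g) (⇑τ ∘ Fin.natAdd g)) (monomial d (1:ℂ)))
      = Nat.factorial (g + m - (auxS m d).card) •
        ∑ δ ∈ Finset.univ.image (auxr' g m d), auxR g m d δ := by
    rw [Finset.smul_sum]
    rw [show (∑ τ : Perm (Fin (g+m)), auxPhi g m (rename
        (Sum.map (⇑τ ∘ Fin.natAdd g) (⇑τ ∘ Fin.natAdd g)) (monomial d (1:ℂ))))
      = ∑ τ : Perm (Fin (g+m)), auxR g m d (auxr' g m d τ) from
        Finset.sum_congr rfl fun τ _ => (auxR_r' g m d τ).symm]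
    rw [← Finset.sum_fiberwise_of_maps_to'
      (fun τ _ => Finset.mem_image_of_mem (auxr' g m d) (Finset.mem_univ τ)) (auxR g m d)]
    apply Finset.sum_congr rfl
    intro δ hδ
    obtain ⟨τ₀, -, hτ₀⟩ := Finset.mem_image.mp hδ
    subst hτ₀
    rw [Finset.sum_const, auxFiber' g m d τ₀]
  have hR : ∑ σ : Perm (Fin m), rename (Sum.map ⇑σ ⇑σ) (monomial d (1:ℂ))
      = Nat.factorial (m - (auxS m d).card) •
        ∑ γ ∈ Finset.univ.image (auxr m d), auxQ m d γ := by
    rw [Finset.smul_sum]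
    rw [show (∑ σ : Perm (Fin m), rename (Sum.map ⇑σ ⇑σ) (monomial d (1:ℂ)))
      = ∑ σ : Perm (Fin m), auxQ m d (auxr m d σ) from
        Finset.sum_congr rfl fun σ _ => (auxQ_r m d σ).symm]
    rw [← Finset.sum_fiberwise_of_maps_to'
      (fun σ _ => Finset.mem_image_of_mem (auxr m d) (Finset.mem_univ σ)) (auxQ m d)]
    apply Finset.sum_congr rfl
    intro γ hγ
    obtain ⟨σ₀, -, hσ₀⟩ := Finset.mem_image.mp hγ
    subst hσ₀
    rw [Finset.sum_const, auxFiber m d σ₀]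
  rw [hL, hR, auxCore g m d, smul_comm]
end StepA

noncomputable section StepB
variable (g m : ℕ)

theorem auxStepB (s : ℕ) (b : MvPolynomial (Fin m ⊕ Fin m) ℂ)
    (hpure : ∀ d ∈ b.support, (auxS m d).card = s)
    (hinv : ∀ σ : Perm (Fin m), rename (Sum.map ⇑σ ⇑σ) b = b) :
    Nat.factorial (m - s) • ∑ τ : Perm (Fin (g+m)), auxPhi g m
        (rename (Sum.map (⇑τ ∘ Fin.natAdd g) (⇑τ ∘ Fin.natAdd g)) b)
      = (Nat.factorial (g + m - s) * Nat.factorial m) • b := by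
  classical
  have hmono : ∀ d ∈ b.support,
      Nat.factorial (m - s) • ∑ τ : Perm (Fin (g+m)), auxPhi g m
        (rename (Sum.map (⇑τ ∘ Fin.natAdd g) (⇑τ ∘ Fin.natAdd g)) (monomial d (coeff d b)))
      = Nat.factorial (g + m - s) •
        ∑ σ : Perm (Fin m), rename (Sum.map ⇑σ ⇑σ) (monomial d (coeff d b)) := by
    intro d hd
    have hc : (monomial d (coeff d b) : MvPolynomial (Fin m ⊕ Fin m) ℂ)
        = coeff d b • monomial d (1:ℂ) := by
      rw [MvPolynomial.smul_monomial, smul_eq_mul, mul_one]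
    have hA := auxStepA g m d
    rw [hpure d hd] at hA
    calc Nat.factorial (m - s) • ∑ τ : Perm (Fin (g+m)), auxPhi g m
          (rename (Sum.map (⇑τ ∘ Fin.natAdd g) (⇑τ ∘ Fin.natAdd g)) (monomial d (coeff d b)))
        = Nat.factorial (m - s) • ∑ τ : Perm (Fin (g+m)), coeff d b • (auxPhi g m
            (rename (Sum.map (⇑τ ∘ Fin.natAdd g) (⇑τ ∘ Fin.natAdd g)) (monomial d (1:ℂ)))) := by
          simp only [show ∀ τ : Perm (Fin (g+m)), auxPhi g m
              (rename (Sum.map (⇑τ ∘ Fin.natAdd g) (⇑τ ∘ Fin.natAdd g)) (monomial d (coeff d b)))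
            = coeff d b • (auxPhi g m
              (rename (Sum.map (⇑τ ∘ Fin.natAdd g) (⇑τ ∘ Fin.natAdd g)) (monomial d (1:ℂ))))
            from fun τ => by rw [hc, map_smul, map_smul]]
      _ = coeff d b • (Nat.factorial (m - s) • ∑ τ : Perm (Fin (g+m)), auxPhi g m
            (rename (Sum.map (⇑τ ∘ Fin.natAdd g) (⇑τ ∘ Fin.natAdd g)) (monomial d (1:ℂ)))) := by
          rw [← Finset.smul_sum, smul_comm]
      _ = coeff d b • (Nat.factorial (g + m - s) •
            ∑ σ : Perm (Fin m), rename (Sum.map ⇑σ ⇑σ) (monomial d (1:ℂ))) := by rw [hA]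
      _ = Nat.factorial (g + m - s) •
            ∑ σ : Perm (Fin m), coeff d b • rename (Sum.map ⇑σ ⇑σ) (monomial d (1:ℂ)) := by
          rw [← Finset.smul_sum, smul_comm]
      _ = Nat.factorial (g + m - s) •
            ∑ σ : Perm (Fin m), rename (Sum.map ⇑σ ⇑σ) (monomial d (coeff d b)) := by
          simp only [show ∀ σ : Perm (Fin m), coeff d b • rename (Sum.map ⇑σ ⇑σ) (monomial d (1:ℂ))
            = rename (Sum.map ⇑σ ⇑σ) (monomial d (coeff d b)) from fun σ => by
              rw [hc, map_smul]]
  calc Nat.factorial (m - s) • ∑ τ : Perm (Fin (g+m)), auxPhi g m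
        (rename (Sum.map (⇑τ ∘ Fin.natAdd g) (⇑τ ∘ Fin.natAdd g)) b)
      = ∑ d ∈ b.support, Nat.factorial (m - s) • ∑ τ : Perm (Fin (g+m)), auxPhi g m
          (rename (Sum.map (⇑τ ∘ Fin.natAdd g) (⇑τ ∘ Fin.natAdd g))
            (monomial d (coeff d b))) := by
        conv_lhs => rw [b.as_sum]
        simp only [show ∀ τ : Perm (Fin (g+m)), auxPhi g m
            (rename (Sum.map (⇑τ ∘ Fin.natAdd g) (⇑τ ∘ Fin.natAdd g))
              (∑ d ∈ b.support, monomial d (coeff d b)))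
          = ∑ d ∈ b.support, auxPhi g m
            (rename (Sum.map (⇑τ ∘ Fin.natAdd g) (⇑τ ∘ Fin.natAdd g))
              (monomial d (coeff d b))) from fun τ => by rw [map_sum, map_sum]]
        rw [Finset.sum_comm, Finset.smul_sum]
    _ = ∑ d ∈ b.support, Nat.factorial (g + m - s) •
          ∑ σ : Perm (Fin m), rename (Sum.map ⇑σ ⇑σ) (monomial d (coeff d b)) :=
        Finset.sum_congr rfl hmono
    _ = Nat.factorial (g + m - s) •
          ∑ σ : Perm (Fin m), rename (Sum.map ⇑σ ⇑σ) (∑ d ∈ b.support, monomial d (coeff d b)) := by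
        simp only [show ∀ σ : Perm (Fin m), rename (Sum.map ⇑σ ⇑σ)
            (∑ d ∈ b.support, monomial d (coeff d b))
          = ∑ d ∈ b.support, rename (Sum.map ⇑σ ⇑σ) (monomial d (coeff d b)) from
            fun σ => by rw [map_sum]]
        rw [Finset.sum_comm, Finset.smul_sum]
    _ = Nat.factorial (g + m - s) • ∑ σ : Perm (Fin m), b := by
        simp only [show ∀ σ : Perm (Fin m), rename (Sum.map ⇑σ ⇑σ)
            (∑ d ∈ b.support, monomial d (coeff d b)) = b from fun σ => by
          rw [← b.as_sum]; exact hinv σ]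
    _ = (Nat.factorial (g + m - s) * Nat.factorial m) • b := by
        rw [Finset.sum_const, Finset.card_univ, Fintype.card_perm, Fintype.card_fin,
          smul_smul]
end StepB

noncomputable section Assemble
variable (g m : ℕ)

def bpart (s : ℕ) (b : MvPolynomial (Fin m ⊕ Fin m) ℂ) : MvPolynomial (Fin m ⊕ Fin m) ℂ :=
  ∑ d ∈ b.support.filter (fun d => (auxS m d).card = s), monomial d (coeff d b)

theorem bpart_sum (b : MvPolynomial (Fin m ⊕ Fin m) ℂ) :
    ∑ s ∈ Finset.range (m+1), bpart m s b = b := by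
  classical
  unfold bpart
  rw [Finset.sum_fiberwise_of_maps_to (fun d hd => ?_) (fun d => monomial d (coeff d b))]
  · exact b.as_sum.symm
  · have h1 := Finset.card_le_univ (auxS m d)
    rw [Fintype.card_fin] at h1
    rw [Finset.mem_range]
    omega

theorem bpart_pure (s : ℕ) (b : MvPolynomial (Fin m ⊕ Fin m) ℂ) :
    ∀ d ∈ (bpart m s b).support, (auxS m d).card = s := by
  classical
  intro d hd
  have h := MvPolynomial.mem_support_iff.mp hd
  unfold bpart at h
  rw [MvPolynomial.coeff_sum] at h
  obtain ⟨d', hd', hne⟩ := Finset.exists_ne_zero_of_sum_ne_zero h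
  rw [MvPolynomial.coeff_monomial] at hne
  split_ifs at hne with heq
  · obtain ⟨-, hcard⟩ := Finset.mem_filter.mp hd'
    rw [← heq]
    exact hcard
  · exact absurd rfl hne

theorem auxS_mapDomain (σ : Perm (Fin m)) (d : (Fin m ⊕ Fin m) →₀ ℕ) :
    auxS m (Finsupp.mapDomain (Sum.map ⇑σ ⇑σ) d) = (auxS m d).image ⇑σ := by
  classical
  unfold auxS
  rw [Finsupp.mapDomain_support_of_injective (σ.injective.sumMap σ.injective)]
  rw [Finset.image_image, Finset.image_image]
  congr 1
  funext i
  cases i <;> rfl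

theorem mapDomain_perm_inv (σ : Perm (Fin m)) (d : (Fin m ⊕ Fin m) →₀ ℕ) :
    Finsupp.mapDomain (Sum.map ⇑σ⁻¹ ⇑σ⁻¹) (Finsupp.mapDomain (Sum.map ⇑σ ⇑σ) d) = d := by
  rw [← Finsupp.mapDomain_comp,
    show Sum.map ⇑σ⁻¹ ⇑σ⁻¹ ∘ Sum.map ⇑σ ⇑σ = id from funext fun i => by cases i <;> simp,
    Finsupp.mapDomain_id]

theorem bpart_inv (s : ℕ) (b : MvPolynomial (Fin m ⊕ Fin m) ℂ)
    (hinv : ∀ σ : Perm (Fin m), rename (Sum.map ⇑σ ⇑σ) b = b) (σ : Perm (Fin m)) :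
    rename (Sum.map ⇑σ ⇑σ) (bpart m s b) = bpart m s b := by
  classical
  have hcoeff : ∀ (σ : Perm (Fin m)) (d : (Fin m ⊕ Fin m) →₀ ℕ),
      coeff (Finsupp.mapDomain (Sum.map ⇑σ ⇑σ) d) b = coeff d b := by
    intro σ d
    conv_lhs => rw [← hinv σ]
    exact coeff_rename_mapDomain _ (σ.injective.sumMap σ.injective) b d
  unfold bpart
  rw [map_sum]
  simp only [rename_monomial]
  apply Finset.sum_nbij' (i := fun d => Finsupp.mapDomain (Sum.map ⇑σ ⇑σ) d)
    (j := fun d => Finsupp.mapDomain (Sum.map ⇑σ⁻¹ ⇑σ⁻¹) d)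
  · intro d hd
    obtain ⟨hsupp, hcard⟩ := Finset.mem_filter.mp hd
    refine Finset.mem_filter.mpr ⟨?_, ?_⟩
    · rw [MvPolynomial.mem_support_iff, hcoeff σ d]
      exact MvPolynomial.mem_support_iff.mp hsupp
    · rw [auxS_mapDomain, Finset.card_image_of_injective _ σ.injective]
      exact hcard
  · intro d hd
    obtain ⟨hsupp, hcard⟩ := Finset.mem_filter.mp hd
    refine Finset.mem_filter.mpr ⟨?_, ?_⟩
    · rw [MvPolynomial.mem_support_iff, hcoeff σ⁻¹ d]
      exact MvPolynomial.mem_support_iff.mp hsupp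
    · rw [auxS_mapDomain, Finset.card_image_of_injective _ σ⁻¹.injective]
      exact hcard
  · intro d _
    exact mapDomain_perm_inv m σ d
  · intro d _
    have := mapDomain_perm_inv m σ⁻¹ d
    rwa [inv_inv] at this
  · intro d _
    rw [hcoeff σ d]

theorem auxSurj (b : MvPolynomial (Fin m ⊕ Fin m) ℂ)
    (hinv : ∀ σ : Perm (Fin m), rename (Sum.map ⇑σ ⇑σ) b = b) :
    ∃ a : MvPolynomial (Fin (g+m) ⊕ Fin (g+m)) ℂ,
      (∀ τ : Perm (Fin (g+m)), rename (Sum.map ⇑τ ⇑τ) a = a) ∧ auxPhi g m a = b := by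
  classical
  refine ⟨∑ s ∈ Finset.range (m+1), ((Nat.factorial (m - s) : ℂ) /
      ((Nat.factorial (g + m - s) * Nat.factorial m : ℕ) : ℂ)) •
      ∑ τ : Perm (Fin (g+m)),
        rename (Sum.map (⇑τ ∘ Fin.natAdd g) (⇑τ ∘ Fin.natAdd g)) (bpart m s b), ?_, ?_⟩
  · intro τ'
    rw [map_sum]
    apply Finset.sum_congr rfl
    intro s _
    rw [map_smul, map_sum]
    congr 1
    simp only [show ∀ τ : Perm (Fin (g+m)),
        rename (Sum.map ⇑τ' ⇑τ') (rename (Sum.map (⇑τ ∘ Fin.natAdd g) (⇑τ ∘ Fin.natAdd g))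
          (bpart m s b))
      = rename (Sum.map (⇑(τ' * τ) ∘ Fin.natAdd g) (⇑(τ' * τ) ∘ Fin.natAdd g)) (bpart m s b)
      from fun τ => by
        rw [rename_rename, show Sum.map ⇑τ' ⇑τ' ∘ Sum.map (⇑τ ∘ Fin.natAdd g) (⇑τ ∘ Fin.natAdd g)
          = Sum.map (⇑(τ' * τ) ∘ Fin.natAdd g) (⇑(τ' * τ) ∘ Fin.natAdd g) from
            funext fun i => by cases i <;> simp [Perm.mul_apply]]]
    exact Fintype.sum_equiv (Equiv.mulLeft τ') _ _ (fun τ => rfl)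
  · rw [map_sum]
    rw [Finset.sum_congr rfl (fun s _ => ?_), bpart_sum m b]
    rw [map_smul, map_sum]
    have hB := auxStepB g m s (bpart m s b) (bpart_pure m s b) (bpart_inv m s b hinv)
    rw [← Nat.cast_smul_eq_nsmul ℂ, ← Nat.cast_smul_eq_nsmul ℂ] at hB
    have hf : ((Nat.factorial (m - s) : ℕ) : ℂ) ≠ 0 :=
      Nat.cast_ne_zero.mpr (Nat.factorial_ne_zero _)
    have hK : ((Nat.factorial (g + m - s) * Nat.factorial m : ℕ) : ℂ) ≠ 0 :=
      Nat.cast_ne_zero.mpr (Nat.mul_ne_zero (Nat.factorial_ne_zero _) (Nat.factorial_ne_zero _))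
    rw [div_eq_mul_inv, mul_comm, mul_smul, hB, smul_smul, inv_mul_cancel₀ hK, one_smul]
end Assemble


/-- Let `n = g + m`.  Identify `ℂ[X₁,…,Xₙ,Y₁,…,Yₙ]` with the polynomial ring on
`Fin (g+m) ⊕ Fin (g+m)` (left summand the `X`'s, right summand the `Y`'s) and
`ℂ[Z₁,…,Z_m,T₁,…,T_m]` with the one on `Fin m ⊕ Fin m`, with `Sₙ` resp. `S_m` acting
diagonally by permuting variables.  Let `φ` be the `ℂ`-algebra map sending
`X_i, Y_i ↦ 0` for `i ≤ g` and `X_{g+j} ↦ Z_j`, `Y_{g+j} ↦ T_j`.  Then the image under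
`φ` of the `Sₙ`-invariant subalgebra is exactly the `S_m`-invariant subalgebra. -/
theorem stmt2 (g m : ℕ) :
    ⇑(aeval (R := ℂ) (Sum.elim
        (Fin.addCases (fun _ : Fin g => (0 : MvPolynomial (Fin m ⊕ Fin m) ℂ))
          (fun j : Fin m => X (Sum.inl j)))
        (Fin.addCases (fun _ : Fin g => (0 : MvPolynomial (Fin m ⊕ Fin m) ℂ))
          (fun j : Fin m => X (Sum.inr j)))) :
        MvPolynomial (Fin (g + m) ⊕ Fin (g + m)) ℂ →ₐ[ℂ] MvPolynomial (Fin m ⊕ Fin m) ℂ) ''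
      {a : MvPolynomial (Fin (g + m) ⊕ Fin (g + m)) ℂ |
        ∀ σ : Equiv.Perm (Fin (g + m)), rename (Sum.map σ σ) a = a}
    = {b : MvPolynomial (Fin m ⊕ Fin m) ℂ |
        ∀ σ : Equiv.Perm (Fin m), rename (Sum.map σ σ) b = b} := by
  apply Set.eq_of_subset_of_subset
  · rintro b ⟨a, ha, rfl⟩ σ
    exact auxForward g m a ha σ
  · intro b hb
    obtain ⟨a, hai, hae⟩ := auxSurj g m b hb
    exact ⟨a, hai, hae⟩
end

section
/- Let ℓ ≥ 1 and r ≥ 1, set ζ_ℓ = e^{2πi/ℓ}, and let w ∈ S_{rℓ} be the product of the r disjoint ℓ-cycles (1,…,ℓ)(ℓ+1,…,2ℓ)⋯((r−1)ℓ+1,…,rℓ). Let C = ⟨w⟩ ≤ S_{rℓ}, let μ_ℓ = ⟨ω⟩ be a cyclic group of order ℓ, and let Δ = ⟨(w,ω)⟩ ≤ S_{rℓ} × μ_ℓ. Let θ, τ and θ̂ be the one-dimensional characters of C, μ_ℓ and Δ determined by θ(w) = ζ_ℓ, τ(ω) = ζ_ℓ, θ̂((w,ω)) = ζ_ℓ.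 Then for every j ∈ {0,…,ℓ−1}, the induced representation Ind_{Δ}^{S_{rℓ}×μ_ℓ}(θ̂^j) is isomorphic to ⊕_{i=0}^{ℓ−1} Ind_{C}^{S_{rℓ}}(θ^{j−i}) ⊠ τ^{i}, where exponents of θ are taken modulo ℓ. -/
noncomputable section AuxStmt6

/-- `charRep` applied. -/
lemma charRep_apply {K : Type*} [Monoid K] (χ : K →* ℂˣ) (k : K) (v : ℂ) :
    charRep χ k v = (χ k : ℂ) * v := rfl

/-- Membership in `IndSpace` unfolded. -/
lemma mem_IndSpace_iff {K G : Type*} [Group K] [Group G] (φ : K →* G) {V : Type*}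
    [AddCommMonoid V] [Module ℂ V] (π : Representation ℂ K V) (f : G → V) :
    f ∈ IndSpace φ π ↔ ∀ (g : G) (h : K), f (g * φ h) = π h⁻¹ (f g) := Iff.rfl

/-- The raw forward map. -/
def fwdFun {G μ : Type*} [Monoid μ] [Fintype μ] (τ : μ →* ℂˣ) (f : G × μ → ℂ) (i : ℕ) : G → ℂ :=
  fun σ => ∑ m : μ, (τ m : ℂ) ^ i * f (σ, m)

/-- The raw backward map. -/
def bwdFun {G μ : Type*} [Monoid μ] [Fintype μ] (ℓ : ℕ) (τ : μ →* ℂˣ) (F : Fin ℓ → G → ℂ) :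
    G × μ → ℂ :=
  fun p => (ℓ : ℂ)⁻¹ * ∑ i : Fin ℓ, (((τ p.2)⁻¹ : ℂˣ) : ℂ) ^ (i : ℕ) * F i p.1

end AuxStmt6

/-- Let `w ∈ S_{rℓ}` be the product of `r` disjoint `ℓ`-cycles
`(1,…,ℓ)(ℓ+1,…,2ℓ)⋯((r−1)ℓ+1,…,rℓ)` (rotation of each block of `ℓ` consecutive letters),
`C = ⟨w⟩`, `μ_ℓ = ⟨ω⟩` cyclic of order `ℓ`, and `Δ = ⟨(w,ω)⟩ ≤ S_{rℓ} × μ_ℓ`.  Letting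
`θ, τ, θ̂` be the characters sending the respective generators to `ζ_ℓ = e^{2πi/ℓ}`, for
every `0 ≤ j < ℓ` one has
`Ind_Δ^{S_{rℓ}×μ_ℓ}(θ̂^j) ≅ ⊕_{i=0}^{ℓ-1} Ind_C^{S_{rℓ}}(θ^{j-i}) ⊠ τ^i`. -/
theorem stmt6 (ℓ r : ℕ) (hℓ : 1 ≤ ℓ) (hr : 1 ≤ r)
    {μ : Type} [Group μ] (ω : μ)
    (hgen : ∀ x : μ, x ∈ Subgroup.zpowers ω) (hord : orderOf ω = ℓ)
    (w : Equiv.Perm (Fin (r * ℓ)))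
    (hw : w = finProdFinEquiv.permCongr ((Equiv.refl (Fin r)).prodCongr (finRotate ℓ)))
    (θ : ↥(Subgroup.zpowers w) →* ℂˣ)
    (hθ : (θ ⟨w, Subgroup.mem_zpowers w⟩ : ℂ) = Complex.exp (2 * Real.pi * Complex.I / ℓ))
    (τ : μ →* ℂˣ) (hτ : (τ ω : ℂ) = Complex.exp (2 * Real.pi * Complex.I / ℓ))
    (θhat : ↥(Subgroup.zpowers ((w, ω) : Equiv.Perm (Fin (r * ℓ)) × μ)) →* ℂˣ)
    (hθhat : (θhat ⟨(w, ω), Subgroup.mem_zpowers _⟩ : ℂ) =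
      Complex.exp (2 * Real.pi * Complex.I / ℓ))
    (j : ℕ) (hj : j < ℓ) :
    RepIso
      (IndRep (Subgroup.zpowers ((w, ω) : Equiv.Perm (Fin (r * ℓ)) × μ)).subtype
        (charRep (θhat ^ j)))
      (PiRep fun i : Fin ℓ =>
        boxChar (IndRep (Subgroup.zpowers w).subtype (charRep (θ ^ ((j : ℤ) - (i : ℕ)))))
          (τ ^ ((i : ℕ) : ℤ))) := by
    classical
  have hℓ0' : ℓ ≠ 0 := by omega
  have hℓ0 : (ℓ : ℂ) ≠ 0 := Nat.cast_ne_zero.mpr hℓ0'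
  set c : ↥(Subgroup.zpowers w) := ⟨w, Subgroup.mem_zpowers w⟩ with hc
  set δ : ↥(Subgroup.zpowers ((w, ω) : Equiv.Perm (Fin (r * ℓ)) × μ)) :=
    ⟨(w, ω), Subgroup.mem_zpowers _⟩ with hδ
  set z : ℂ := ((θ c : ℂˣ) : ℂ) with hzdef
  have hz0 : z ≠ 0 := Units.ne_zero _
  have hzexp : z = Complex.exp (2 * Real.pi * Complex.I / ℓ) := hθ
  have hprim : IsPrimitiveRoot z ℓ := by
    rw [hzexp]; exact Complex.isPrimitiveRoot_exp ℓ hℓ0'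
  have hτω' : ((τ ω : ℂˣ) : ℂ) = z := by rw [hτ, hzexp]
  have hθδ : ((θhat δ : ℂˣ) : ℂ) = z := by rw [hθhat, hzexp]
  have hτz : ∀ k : ℤ, ((τ (ω ^ k) : ℂˣ) : ℂ) = z ^ k := by
    intro k; rw [map_zpow, Units.val_zpow_eq_zpow_val, hτω']
  have hθval : ∀ (k e : ℤ), (((θ ^ e) ((c ^ k)⁻¹) : ℂˣ) : ℂ) = z ^ (-(k * e)) := by
    intro k e
    have h1 : (θ ^ e) ((c ^ k)⁻¹) = (θ c) ^ (-(k * e)) := by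
      show (θ ((c ^ k)⁻¹)) ^ e = _
      rw [← zpow_neg, map_zpow, ← zpow_mul]
      congr 1; ring
    rw [h1, Units.val_zpow_eq_zpow_val, ← hzdef]
  have hθhval : ∀ k : ℤ, (((θhat ^ j) ((δ ^ k)⁻¹) : ℂˣ) : ℂ) = z ^ (-(k * (j : ℤ))) := by
    intro k
    have h1 : (θhat ^ j) ((δ ^ k)⁻¹) = (θhat δ) ^ (-(k * (j : ℤ))) := by
      show (θhat ((δ ^ k)⁻¹)) ^ j = _
      rw [← zpow_neg, map_zpow, ← zpow_natCast (((θhat δ) ^ (-k) : ℂˣ)) j, ← zpow_mul]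
      congr 1; ring
    rw [h1, Units.val_zpow_eq_zpow_val, hθδ]
  have hω1 : ω ^ (ℓ : ℤ) = 1 := by
    rw [zpow_natCast, ← hord, pow_orderOf_eq_one]
  have hm1 : ∀ m : μ, m ^ (ℓ : ℤ) = 1 := by
    intro m
    obtain ⟨n, hn⟩ := hgen m
    have hn' : ω ^ n = m := hn
    rw [← hn', ← zpow_mul, mul_comm n (ℓ : ℤ), zpow_mul, hω1, one_zpow]
  have hmpow : ∀ m : μ, (τ m : ℂ) ^ ℓ = 1 := by
    intro m
    rw [← Units.val_pow_eq_pow_val, ← map_pow]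
    have h : m ^ ℓ = 1 := by rw [← zpow_natCast, hm1]
    rw [h, map_one, Units.val_one]
  have hker : ∀ m : μ, (τ m : ℂ) = 1 → m = 1 := by
    intro m hm
    obtain ⟨n, hn⟩ := hgen m
    have hn' : ω ^ n = m := hn
    rw [← hn'] at hm
    rw [hτz] at hm
    obtain ⟨t, ht⟩ := (hprim.zpow_eq_one_iff_dvd n).mp hm
    rw [← hn', ht, zpow_mul, hω1, one_zpow]
  haveI : Finite μ := by
    refine Finite.of_surjective (fun a : Fin ℓ => ω ^ (a : ℕ)) ?_
    intro x
    obtain ⟨n, hn⟩ := hgen x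
    have hn' : ω ^ n = x := hn
    have hl0 : (0 : ℤ) < ℓ := by exact_mod_cast Nat.pos_of_ne_zero hℓ0'
    have h0 : 0 ≤ n % ℓ := Int.emod_nonneg n (by omega)
    have hlt : n % ℓ < ℓ := Int.emod_lt_of_pos n hl0
    refine ⟨⟨(n % ℓ).toNat, by omega⟩, ?_⟩
    show ω ^ (n % ℓ).toNat = x
    rw [← hn', ← zpow_natCast, Int.toNat_of_nonneg h0]
    conv_rhs => rw [← Int.emod_add_mul_ediv n ℓ]
    rw [zpow_add, zpow_mul, hω1, one_zpow, mul_one]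
  haveI : Fintype μ := Fintype.ofFinite μ
  have hcard : Fintype.card μ = ℓ := by
    rw [← Nat.card_eq_fintype_card, ← hord]
    exact (orderOf_eq_card_of_forall_mem_zpowers hgen).symm
  -- character sum over powers
  have sumA : ∀ x : μ, (∑ i : Fin ℓ, (τ x : ℂ) ^ (i : ℕ)) = if x = 1 then (ℓ : ℂ) else 0 := by
    intro x
    by_cases hx : x = 1
    · simp [hx]
    · rw [if_neg hx]
      have h1 : (τ x : ℂ) ≠ 1 := fun h => hx (hker x h)
      rw [Fin.sum_univ_eq_sum_range (fun i => (τ x : ℂ) ^ i) ℓ, geom_sum_eq h1, hmpow x]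
      simp
  -- character sum over the group
  have sumB : ∀ k : ℤ, (∑ m : μ, (τ m : ℂ) ^ k) = if (ℓ : ℤ) ∣ k then (ℓ : ℂ) else 0 := by
    intro k
    by_cases hd : (ℓ : ℤ) ∣ k
    · rw [if_pos hd]
      obtain ⟨t, rfl⟩ := hd
      have h : ∀ m : μ, (τ m : ℂ) ^ ((ℓ : ℤ) * t) = 1 := by
        intro m
        rw [zpow_mul, zpow_natCast, hmpow, one_zpow]
      simp [h, hcard]
    · rw [if_neg hd]
      have hzk : z ^ k ≠ 1 := fun h => hd ((hprim.zpow_eq_one_iff_dvd k).mp h)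
      have hre := Equiv.sum_comp (Equiv.mulLeft ω) (fun m : μ => (τ m : ℂ) ^ k)
      simp only [Equiv.coe_mulLeft] at hre
      have hexp : ∀ m ∈ (Finset.univ : Finset μ), ((τ (ω * m) : ℂˣ) : ℂ) ^ k = z ^ k * (τ m : ℂ) ^ k := by
        intro m _
        rw [map_mul, Units.val_mul, mul_zpow, hτω']
      rw [Finset.sum_congr rfl hexp, ← Finset.mul_sum] at hre
      by_contra hS
      exact hzk (mul_right_cancel₀ hS (hre.trans (one_mul _).symm))
  -- equivariance of elements of the domain
  have memF : ∀ (f : Equiv.Perm (Fin (r * ℓ)) × μ → ℂ),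
      f ∈ IndSpace (Subgroup.zpowers ((w, ω) : Equiv.Perm (Fin (r * ℓ)) × μ)).subtype
        (charRep (θhat ^ j)) →
      ∀ (σ : Equiv.Perm (Fin (r * ℓ))) (m : μ) (k : ℤ),
      f (σ * w ^ k, m) = z ^ (-(k * (j : ℤ))) * f (σ, m * ω ^ (-k)) := by
    intro f hf σ m k
    have h2 := (mem_IndSpace_iff _ _ f).mp hf (σ, m * ω ^ (-k)) (δ ^ k)
    rw [show ((Subgroup.zpowers ((w, ω) : Equiv.Perm (Fin (r * ℓ)) × μ)).subtype) (δ ^ k)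
        = ((w ^ k, ω ^ k) : Equiv.Perm (Fin (r * ℓ)) × μ) from rfl,
      charRep_apply, hθhval] at h2
    have harg : ((σ, m * ω ^ (-k)) * ((w ^ k, ω ^ k) : Equiv.Perm (Fin (r * ℓ)) × μ))
        = (σ * w ^ k, m) := by
      simp [Prod.ext_iff, mul_assoc]
    rw [harg] at h2
    exact h2
  -- equivariance of elements of the target components
  have memW : ∀ (i : Fin ℓ) (F : Equiv.Perm (Fin (r * ℓ)) → ℂ),
      F ∈ IndSpace (Subgroup.zpowers w).subtype (charRep (θ ^ ((j : ℤ) - (i : ℕ)))) →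
      ∀ (σ : Equiv.Perm (Fin (r * ℓ))) (k : ℤ),
      F (σ * w ^ k) = z ^ (-(k * ((j : ℤ) - (i : ℕ)))) * F σ := by
    intro i F hF σ k
    have h2 := (mem_IndSpace_iff _ _ F).mp hF σ (c ^ k)
    rw [show ((Subgroup.zpowers w).subtype) (c ^ k) = w ^ k from rfl,
      charRep_apply, hθval] at h2
    exact h2
  -- the forward map preserves the induction space condition
  have memFwd : ∀ (f : Equiv.Perm (Fin (r * ℓ)) × μ → ℂ),
      f ∈ IndSpace (Subgroup.zpowers ((w, ω) : Equiv.Perm (Fin (r * ℓ)) × μ)).subtype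
        (charRep (θhat ^ j)) →
      ∀ i : Fin ℓ, fwdFun τ f (i : ℕ) ∈ IndSpace (Subgroup.zpowers w).subtype
        (charRep (θ ^ ((j : ℤ) - (i : ℕ)))) := by
    intro f hf i
    rw [mem_IndSpace_iff]
    intro g h
    obtain ⟨k, hk⟩ := Subgroup.mem_zpowers_iff.mp h.2
    have hh : h = c ^ k := Subtype.ext hk.symm
    subst hh
    rw [show ((Subgroup.zpowers w).subtype) (c ^ k) = w ^ k from rfl, charRep_apply, hθval]
    show (∑ m : μ, (τ m : ℂ) ^ (i : ℕ) * f (g * w ^ k, m))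
        = z ^ (-(k * ((j : ℤ) - (i : ℕ)))) * ∑ m : μ, (τ m : ℂ) ^ (i : ℕ) * f (g, m)
    have h4 : z ^ (k * ((i : ℕ) : ℤ)) * z ^ (-(k * (j : ℤ)))
        = z ^ (-(k * ((j : ℤ) - (i : ℕ)))) := by
      rw [← zpow_add₀ hz0]; congr 1; ring
    calc (∑ m : μ, (τ m : ℂ) ^ (i : ℕ) * f (g * w ^ k, m))
        = ∑ m : μ, (τ (m * ω ^ k) : ℂ) ^ (i : ℕ) * (z ^ (-(k * (j : ℤ))) * f (g, m)) := by
          refine Fintype.sum_equiv (Equiv.mulRight (ω ^ (-k))) _ _ ?_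
          intro m
          rw [memF f hf g m k]
          simp [mul_assoc]
      _ = z ^ (-(k * ((j : ℤ) - (i : ℕ)))) * ∑ m : μ, (τ m : ℂ) ^ (i : ℕ) * f (g, m) := by
          rw [Finset.mul_sum]
          refine Finset.sum_congr rfl fun m _ => ?_
          have h3 : ((τ (ω ^ k) : ℂˣ) : ℂ) ^ (i : ℕ) = z ^ (k * ((i : ℕ) : ℤ)) := by
            rw [hτz, ← zpow_natCast (z ^ k), ← zpow_mul]
          rw [map_mul, Units.val_mul, mul_pow, h3, ← h4]
          ring
  -- the backward map preserves the induction space condition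
  have memBwd : ∀ (F : Fin ℓ → Equiv.Perm (Fin (r * ℓ)) → ℂ),
      (∀ i : Fin ℓ, F i ∈ IndSpace (Subgroup.zpowers w).subtype
        (charRep (θ ^ ((j : ℤ) - (i : ℕ))))) →
      bwdFun ℓ τ F ∈ IndSpace
        (Subgroup.zpowers ((w, ω) : Equiv.Perm (Fin (r * ℓ)) × μ)).subtype
        (charRep (θhat ^ j)) := by
    intro F hF
    rw [mem_IndSpace_iff]
    intro g h
    obtain ⟨k, hk⟩ := Subgroup.mem_zpowers_iff.mp h.2
    have hh : h = δ ^ k := Subtype.ext hk.symm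
    subst hh
    rw [show ((Subgroup.zpowers ((w, ω) : Equiv.Perm (Fin (r * ℓ)) × μ)).subtype) (δ ^ k)
        = ((w ^ k, ω ^ k) : Equiv.Perm (Fin (r * ℓ)) × μ) from rfl, charRep_apply, hθhval]
    obtain ⟨σ, m⟩ := g
    show (ℓ : ℂ)⁻¹ * ∑ i : Fin ℓ, (((τ (m * ω ^ k))⁻¹ : ℂˣ) : ℂ) ^ (i : ℕ) * F i (σ * w ^ k)
        = z ^ (-(k * (j : ℤ))) *
          ((ℓ : ℂ)⁻¹ * ∑ i : Fin ℓ, (((τ m)⁻¹ : ℂˣ) : ℂ) ^ (i : ℕ) * F i σ)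
    have hterm : ∀ i ∈ (Finset.univ : Finset (Fin ℓ)),
        (((τ (m * ω ^ k))⁻¹ : ℂˣ) : ℂ) ^ (i : ℕ) * F i (σ * w ^ k)
        = z ^ (-(k * (j : ℤ))) * ((((τ m)⁻¹ : ℂˣ) : ℂ) ^ (i : ℕ) * F i σ) := by
      intro i _
      rw [memW i (F i) (hF i) σ k]
      have h3 : (((τ (ω ^ k))⁻¹ : ℂˣ) : ℂ) ^ (i : ℕ) = z ^ (-(k * ((i : ℕ) : ℤ))) := by
        rw [show ((τ (ω ^ k))⁻¹ : ℂˣ) = τ ((ω ^ k)⁻¹) from (map_inv τ _).symm, ← zpow_neg,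
          hτz, ← zpow_natCast (z ^ (-k)), ← zpow_mul]
        congr 1; ring
      have h4 : z ^ (-(k * ((i : ℕ) : ℤ))) * z ^ (-(k * ((j : ℤ) - (i : ℕ))))
          = z ^ (-(k * (j : ℤ))) := by
        rw [← zpow_add₀ hz0]; congr 1; ring
      rw [map_mul, mul_inv, Units.val_mul, mul_pow, h3, ← h4]
      ring
    rw [Finset.sum_congr rfl hterm, ← Finset.mul_sum]
    ring
  -- right inverse on raw functions
  have hBF : ∀ f : Equiv.Perm (Fin (r * ℓ)) × μ → ℂ,
      bwdFun ℓ τ (fun i : Fin ℓ => fwdFun τ f (i : ℕ)) = f := by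
    intro f
    funext p
    obtain ⟨σ, m⟩ := p
    show (ℓ : ℂ)⁻¹ * ∑ i : Fin ℓ, (((τ m)⁻¹ : ℂˣ) : ℂ) ^ (i : ℕ) *
        ∑ m' : μ, (τ m' : ℂ) ^ (i : ℕ) * f (σ, m') = f (σ, m)
    have h1 : ∀ i ∈ (Finset.univ : Finset (Fin ℓ)), (((τ m)⁻¹ : ℂˣ) : ℂ) ^ (i : ℕ) *
        ∑ m' : μ, (τ m' : ℂ) ^ (i : ℕ) * f (σ, m')
        = ∑ m' : μ, (τ (m' * m⁻¹) : ℂ) ^ (i : ℕ) * f (σ, m') := by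
      intro i _
      rw [Finset.mul_sum]
      refine Finset.sum_congr rfl fun m' _ => ?_
      rw [map_mul, map_inv, Units.val_mul, mul_pow]
      ring
    rw [Finset.sum_congr rfl h1, Finset.sum_comm]
    have h2 : ∀ m' ∈ (Finset.univ : Finset μ), (∑ i : Fin ℓ, (τ (m' * m⁻¹) : ℂ) ^ (i : ℕ) * f (σ, m'))
        = if m' = m then (ℓ : ℂ) * f (σ, m') else 0 := by
      intro m' _
      rw [← Finset.sum_mul, sumA]
      by_cases hm' : m' = m
      · rw [if_pos (mul_inv_eq_one.mpr hm'), if_pos hm']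
      · rw [if_neg (fun h => hm' (mul_inv_eq_one.mp h)), if_neg hm', zero_mul]
    rw [Finset.sum_congr rfl h2, Finset.sum_ite_eq' Finset.univ m (fun m' => (ℓ : ℂ) * f (σ, m')),
      if_pos (Finset.mem_univ m), ← mul_assoc, inv_mul_cancel₀ hℓ0, one_mul]
  -- left inverse on raw functions
  have hFB : ∀ (F : Fin ℓ → Equiv.Perm (Fin (r * ℓ)) → ℂ) (i : Fin ℓ),
      fwdFun τ (bwdFun ℓ τ F) (i : ℕ) = F i := by
    intro F i
    funext σ
    show (∑ m : μ, (τ m : ℂ) ^ (i : ℕ) *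
        ((ℓ : ℂ)⁻¹ * ∑ i' : Fin ℓ, (((τ m)⁻¹ : ℂˣ) : ℂ) ^ (i' : ℕ) * F i' σ)) = F i σ
    have h1 : ∀ m ∈ (Finset.univ : Finset μ), (τ m : ℂ) ^ (i : ℕ) *
        ((ℓ : ℂ)⁻¹ * ∑ i' : Fin ℓ, (((τ m)⁻¹ : ℂˣ) : ℂ) ^ (i' : ℕ) * F i' σ)
        = (ℓ : ℂ)⁻¹ * ∑ i' : Fin ℓ, (τ m : ℂ) ^ (((i : ℕ) : ℤ) - ((i' : ℕ) : ℤ)) * F i' σ := by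
      intro m _
      rw [mul_left_comm]
      congr 1
      rw [Finset.mul_sum]
      refine Finset.sum_congr rfl fun i' _ => ?_
      have hne : (τ m : ℂ) ≠ 0 := Units.ne_zero _
      rw [Units.val_inv_eq_inv_val, inv_pow, ← zpow_natCast ((τ m : ℂ)) (i' : ℕ), ← zpow_neg,
        ← mul_assoc, ← zpow_natCast ((τ m : ℂ)) (i : ℕ), ← zpow_add₀ hne, sub_eq_add_neg]
    rw [Finset.sum_congr rfl h1, ← Finset.mul_sum, Finset.sum_comm]
    have h2 : ∀ i' ∈ (Finset.univ : Finset (Fin ℓ)),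
        (∑ m : μ, (τ m : ℂ) ^ (((i : ℕ) : ℤ) - ((i' : ℕ) : ℤ)) * F i' σ)
        = if i' = i then (ℓ : ℂ) * F i' σ else 0 := by
      intro i' _
      rw [← Finset.sum_mul, sumB]
      have hiff : ((ℓ : ℤ) ∣ ((i : ℕ) : ℤ) - ((i' : ℕ) : ℤ)) ↔ i' = i := by
        constructor
        · intro hd
          have h5 := Int.eq_zero_of_abs_lt_dvd hd
            (by rw [abs_lt]; have := i.isLt; have := i'.isLt; omega)
          have h6 : (i' : ℕ) = (i : ℕ) := by omega
          exact Fin.ext h6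
        · rintro rfl; simp
      by_cases hi' : i' = i
      · rw [if_pos (hiff.mpr hi'), if_pos hi']
      · rw [if_neg (fun h => hi' (hiff.mp h)), if_neg hi', zero_mul]
    rw [Finset.sum_congr rfl h2, Finset.sum_ite_eq' Finset.univ i (fun i' => (ℓ : ℂ) * F i' σ),
      if_pos (Finset.mem_univ i), ← mul_assoc, inv_mul_cancel₀ hℓ0, one_mul]
  -- the linear maps
  let Efwd : ↥(IndSpace (Subgroup.zpowers ((w, ω) : Equiv.Perm (Fin (r * ℓ)) × μ)).subtype
        (charRep (θhat ^ j))) →ₗ[ℂ]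
      (∀ i : Fin ℓ, ↥(IndSpace (Subgroup.zpowers w).subtype
        (charRep (θ ^ ((j : ℤ) - (i : ℕ)))))) :=
    { toFun := fun f i => ⟨fwdFun τ (f : Equiv.Perm (Fin (r * ℓ)) × μ → ℂ) (i : ℕ),
        memFwd _ f.2 i⟩
      map_add' := by
        intro f g
        refine funext fun i => Subtype.ext (funext fun σ => ?_)
        simp [fwdFun, mul_add, Finset.sum_add_distrib]
      map_smul' := by
        intro a f
        refine funext fun i => Subtype.ext (funext fun σ => ?_)
        simp [fwdFun, Finset.mul_sum, mul_left_comm] }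
  let Ebwd : (∀ i : Fin ℓ, ↥(IndSpace (Subgroup.zpowers w).subtype
        (charRep (θ ^ ((j : ℤ) - (i : ℕ)))))) →ₗ[ℂ]
      ↥(IndSpace (Subgroup.zpowers ((w, ω) : Equiv.Perm (Fin (r * ℓ)) × μ)).subtype
        (charRep (θhat ^ j))) :=
    { toFun := fun F => ⟨bwdFun ℓ τ (fun i => (F i : Equiv.Perm (Fin (r * ℓ)) → ℂ)),
        memBwd _ (fun i => (F i).2)⟩
      map_add' := by
        intro F G
        refine Subtype.ext (funext fun p => ?_)
        simp [bwdFun, mul_add, Finset.sum_add_distrib, Finset.mul_sum] <;> ring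
      map_smul' := by
        intro a F
        refine Subtype.ext (funext fun p => ?_)
        simp [bwdFun, Finset.mul_sum, mul_left_comm] <;> ring }
  have h1 : Efwd.comp Ebwd = LinearMap.id := by
    refine LinearMap.ext fun F => funext fun i => Subtype.ext ?_
    exact hFB (fun i' => ((F i' : Equiv.Perm (Fin (r * ℓ)) → ℂ))) i
  have h2 : Ebwd.comp Efwd = LinearMap.id := by
    refine LinearMap.ext fun f => Subtype.ext ?_
    exact hBF ((f : Equiv.Perm (Fin (r * ℓ)) × μ → ℂ))
  refine ⟨LinearEquiv.ofLinear Efwd Ebwd h1 h2, ?_⟩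
  intro g v
  rw [LinearEquiv.ofLinear_apply, LinearEquiv.ofLinear_apply]
  refine funext fun i => Subtype.ext (funext fun σ => ?_)
  obtain ⟨g1, g2⟩ := g
  show (∑ m : μ, (τ m : ℂ) ^ (i : ℕ) * (v : Equiv.Perm (Fin (r * ℓ)) × μ → ℂ)
        ((g1, g2)⁻¹ * (σ, m)))
      = (((τ ^ ((i : ℕ) : ℤ)) g2 : ℂˣ) : ℂ) *
        (∑ m : μ, (τ m : ℂ) ^ (i : ℕ) * (v : Equiv.Perm (Fin (r * ℓ)) × μ → ℂ) (g1⁻¹ * σ, m))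
  have hsc : (((τ ^ ((i : ℕ) : ℤ)) g2 : ℂˣ) : ℂ) = (τ g2 : ℂ) ^ (i : ℕ) := by
    show (((τ g2) ^ ((i : ℕ) : ℤ) : ℂˣ) : ℂ) = _
    rw [Units.val_zpow_eq_zpow_val, zpow_natCast]
  rw [hsc]
  calc (∑ m : μ, (τ m : ℂ) ^ (i : ℕ) * (v : Equiv.Perm (Fin (r * ℓ)) × μ → ℂ)
        ((g1, g2)⁻¹ * (σ, m)))
      = ∑ m : μ, (τ (g2 * m) : ℂ) ^ (i : ℕ) *
          (v : Equiv.Perm (Fin (r * ℓ)) × μ → ℂ) (g1⁻¹ * σ, m) := by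
        refine Fintype.sum_equiv (Equiv.mulLeft g2⁻¹) _ _ ?_
        intro m
        simp [Prod.ext_iff, mul_assoc]
    _ = (τ g2 : ℂ) ^ (i : ℕ) * ∑ m : μ, (τ m : ℂ) ^ (i : ℕ) *
          (v : Equiv.Perm (Fin (r * ℓ)) × μ → ℂ) (g1⁻¹ * σ, m) := by
        rw [Finset.mul_sum]
        refine Finset.sum_congr rfl fun m _ => ?_
        rw [map_mul, Units.val_mul, mul_pow]
        ring
end

section
/- Let ℓ ≥ 1, r ≥ 1, e ∈ {0,1}, n = rℓ + e, and ζ_ℓ = e^{2πi/ℓ}. Let w ∈ S_n be the product of the r disjoint ℓ-cycles (e+1,…,e+ℓ)(e+ℓ+1,…,e+2ℓ)⋯(n−ℓ+1,…,n). Consider the permutation action of S_n on ℂ^n. Then there exists a vector v ∈ ℂ^n whose stabilizer in S_n is the trivial subgroup and which satisfies w·v = ζ_ℓ·v. (Explicitly, one may take v with first coordinate 0 if e = 1, followed for k = 1,…,r by the block (kζ_ℓ^{ℓ−1}, kζ_ℓ^{ℓ−2}, …, kζ_ℓ, k).) -/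
/-- Let `n = e + rℓ` with `e ∈ {0,1}` and let `w ∈ Sₙ` be the product of `r` disjoint
`ℓ`-cycles `(e+1,…,e+ℓ)⋯(n−ℓ+1,…,n)` (realized by rotating each block of `ℓ`
consecutive letters after the first `e` letters).  For the permutation action of `Sₙ`
on `ℂⁿ`, there is a vector `v ∈ ℂⁿ` with trivial stabilizer satisfying
`w • v = ζ_ℓ • v`, where `ζ_ℓ = e^{2πi/ℓ}`. -/
theorem stmt7 (ℓ r : ℕ) (hℓ : 1 ≤ ℓ) (hr : 1 ≤ r) (e : ℕ) (he : e ≤ 1)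
    (w : Equiv.Perm (Fin (e + r * ℓ)))
    (hw : w = finSumFinEquiv.permCongr
      ((Equiv.refl (Fin e)).sumCongr
        (finProdFinEquiv.permCongr ((Equiv.refl (Fin r)).prodCongr (finRotate ℓ))))) :
    ∃ v : Fin (e + r * ℓ) → ℂ,
      (∀ σ : Equiv.Perm (Fin (e + r * ℓ)), (∀ i, v (σ⁻¹ i) = v i) → σ = 1) ∧
      (∀ i, v (w⁻¹ i) = Complex.exp (2 * Real.pi * Complex.I / ℓ) * v i) := by
  set ζ : ℂ := Complex.exp (2 * Real.pi * Complex.I / ℓ) with hζdef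
  have hℓ0 : ℓ ≠ 0 := by omega
  have hprim : IsPrimitiveRoot ζ ℓ := Complex.isPrimitiveRoot_exp ℓ hℓ0
  have hζ1 : ζ ^ ℓ = 1 := hprim.pow_eq_one
  have hζne : ζ ≠ 0 := by
    intro h
    rw [h, zero_pow hℓ0] at hζ1
    exact zero_ne_one hζ1
  have habs : ‖ζ‖ = 1 := by
    have h2 : (2 * (Real.pi:ℂ) * Complex.I / ℓ) = ((2*Real.pi/ℓ : ℝ) : ℂ) * Complex.I := by
      push_cast; ring
    rw [hζdef, h2, Complex.norm_exp_ofReal_mul_I]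
  set g : Fin r × Fin ℓ → ℂ := fun p => ((p.1.val + 1 : ℕ) : ℂ) * ζ ^ (-(p.2.val : ℤ)) with hg
  have hgne : ∀ p, g p ≠ 0 := by
    intro p
    apply mul_ne_zero
    · exact_mod_cast Nat.succ_ne_zero p.1.val
    · exact zpow_ne_zero _ hζne
  have hginj : Function.Injective g := by
    rintro ⟨k, j⟩ ⟨k', j'⟩ h
    simp only [hg] at h
    have habs' := congrArg (fun z : ℂ => ‖z‖) h
    simp only [norm_mul, norm_zpow, map_mul, map_zpow₀, habs, one_zpow, mul_one, Complex.norm_natCast] at habs'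
    have hk : k = k' := by
      ext
      have : k.val + 1 = k'.val + 1 := by exact_mod_cast habs'
      omega
    subst hk
    have hz : ζ ^ (-(j.val : ℤ)) = ζ ^ (-(j'.val : ℤ)) := by
      have hne : ((k.val + 1 : ℕ) : ℂ) ≠ 0 := by exact_mod_cast Nat.succ_ne_zero k.val
      exact mul_left_cancel₀ hne h
    have hz2 : ζ ^ (j.val : ℤ) = ζ ^ (j'.val : ℤ) := by
      rw [zpow_neg, zpow_neg] at hz
      exact inv_injective hz
    have : j.val = j'.val := by
      apply hprim.pow_inj j.isLt j'.isLt
      exact_mod_cast hz2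
    exact Prod.ext rfl (Fin.ext this)
  set F : Fin e ⊕ Fin (r*ℓ) → ℂ :=
    Sum.elim (fun _ => 0) (fun q => g (finProdFinEquiv.symm q)) with hF
  have hsub : Subsingleton (Fin e) := by
    interval_cases e <;> infer_instance
  have hFinj : Function.Injective F := by
    rintro (a | q) (b | q') h
    · exact congrArg Sum.inl (Subsingleton.elim a b)
    · exact absurd h.symm (hgne _)
    · exact absurd h (hgne _)
    · exact congrArg Sum.inr (finProdFinEquiv.symm.injective (hginj h))
  refine ⟨fun i => F (finSumFinEquiv.symm i), ?_, ?_⟩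
  · intro σ hσ
    have hvinj : Function.Injective (fun i => F (finSumFinEquiv.symm i)) :=
      hFinj.comp finSumFinEquiv.symm.injective
    have hfix : ∀ i, σ⁻¹ i = i := fun i => hvinj (hσ i)
    have : σ⁻¹ = 1 := Equiv.ext hfix
    rw [← inv_inv σ, this, inv_one]
  · intro i
    set P : Equiv.Perm (Fin e ⊕ Fin (r*ℓ)) :=
      (Equiv.refl (Fin e)).sumCongr
        (finProdFinEquiv.permCongr ((Equiv.refl (Fin r)).prodCongr (finRotate ℓ))) with hP
    obtain ⟨s, rfl⟩ : ∃ s, i = finSumFinEquiv (P s) :=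
      ⟨P.symm (finSumFinEquiv.symm i), by simp⟩
    have hwin : w⁻¹ (finSumFinEquiv (P s)) = finSumFinEquiv s := by
      rw [Equiv.Perm.inv_eq_iff_eq, hw]
      simp [Equiv.permCongr_apply, hP]
    rw [hwin]
    simp only [Equiv.symm_apply_apply]
    obtain ⟨m, rfl⟩ : ∃ m, ℓ = m + 1 := ⟨ℓ - 1, by omega⟩
    have key : ∀ j : Fin (m+1), ζ ^ (-(j.val : ℤ)) = ζ * ζ ^ (-(((finRotate (m+1)) j).val : ℤ)) := by
      intro j
      set j'' := (finRotate (m+1)) j with hj''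
      have h1 : ζ ^ (j''.val) = ζ ^ (j.val + 1) := by
        conv_rhs => rw [pow_eq_pow_mod _ hζ1]
        congr 1
        rw [hj'', finRotate_succ_apply, Fin.val_add, Fin.val_one']
        conv_lhs => rw [Nat.add_mod]
        conv_rhs => rw [Nat.add_mod]
        simp [Nat.mod_mod]
      have h2 : ζ ^ ((j''.val : ℤ)) = ζ * ζ ^ ((j.val : ℤ)) := by
        rw [zpow_natCast, zpow_natCast, h1, pow_succ, mul_comm]
      rw [zpow_neg, zpow_neg, h2, mul_inv]
      field_simp
    cases s with
    | inl a =>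
      simp [hP, hF]
    | inr q =>
      simp only [hP, hF, Equiv.sumCongr_apply, Sum.map_inr, Sum.elim_inr,
        Equiv.permCongr_apply, Equiv.symm_apply_apply]
      obtain ⟨k, j⟩ := finProdFinEquiv.symm q
      simp only [Equiv.prodCongr_apply, Equiv.refl_apply, Prod.map, hg]
      rw [key j]
      ring
end
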